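/- arXiv:1905.09266 — 4 statements merged into one kernel-verified Lean document; each statement's English description precedes it below -/
import Mathlib

section
/- For the Bernoulli doubling map τ(z) = z² on the unit circle and observables ψ_k(z) = z^k with -N̄ ≤ k ≤ N̄, if the number of equidistant nodes satisfies M ≥ 3N/2 with N = 2N̄+1, then the EDMD matrix A = G H^{-1} has entries A_{kl} = δ_{2k,l}; in particular the only nonzero eigenvalue of A is 1 (with eigenvector corresponding to the constant observable), and all other eigenvalues of A vanish. -/
/-!
On the `M` equidistant nodes `ζ^m` (`ζ = exp (2πi/M)`) the characters `m ↦ ζ^(mk)` are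
orthogonal as long as `|k| < M`, so for indices in the window `|k| ≤ N̄` the Gram matrix `H` is
the permutation matrix of `k ↦ -k` and `G` is the `0/1` matrix of `k ↦ -2k`; this is where
`M ≥ 3N/2` enters. Hence `H⁻¹ = H` and `A = G H` is the matrix of `k ↦ 2k`. Its `n`-th power
is the matrix of `k ↦ 2^n k`, which only keeps `k = 0` once `2^n > N̄`, so `A^(N̄+1) = A^N̄`
and every eigenvalue `μ` satisfies `μ^N̄ (μ - 1) = 0`; the constant observable is fixed by `A`.
-/

open Complex Finset
open scoped Matrix

section RootsOfUnity

variable {K : Type*} [Field K] {ζ : K} {M : ℕ}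

theorem IsPrimitiveRoot.sum_pow_zpow (hζ : IsPrimitiveRoot ζ M) (k : ℤ) :
    ∑ m ∈ range M, (ζ ^ m) ^ k = if (M : ℤ) ∣ k then (M : K) else 0 := by
  have hswap : ∀ n : ℕ, (ζ ^ n) ^ k = (ζ ^ k) ^ n := fun n => by
    rw [← zpow_natCast, ← zpow_mul, mul_comm, zpow_mul, zpow_natCast]
  simp_rw [hswap]
  split_ifs with hk
  · simp [(hζ.zpow_eq_one_iff_dvd k).2 hk]
  · have hne : ζ ^ k ≠ 1 := mt (hζ.zpow_eq_one_iff_dvd k).1 hk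
    refine eq_zero_of_ne_zero_of_mul_left_eq_zero (sub_ne_zero_of_ne hne.symm) ?_
    rw [mul_neg_geom_sum, ← hswap, hζ.pow_eq_one, one_zpow, sub_self]

theorem IsPrimitiveRoot.inv_mul_sum_pow_zpow_mul_zpow [NeZero M] (hζ : IsPrimitiveRoot ζ M)
    (p : ℕ) {N a b : ℤ} (ha : |a| ≤ N) (hb : |b| ≤ N) (hN : (p + 1) * N < M) :
    (M : K)⁻¹ * ∑ m ∈ range M, ((ζ ^ m) ^ p) ^ a * (ζ ^ m) ^ b =
      if -(p : ℤ) * a = b then 1 else 0 := by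
  have := hζ.neZero'
  have hab : |p * a + b| < M := by
    rw [abs_lt]
    constructor <;> nlinarith [abs_le.1 ha, abs_le.1 hb]
  simp_rw [← zpow_natCast (ζ ^ _) p, ← zpow_mul,
    ← zpow_add₀ (pow_ne_zero _ (hζ.ne_zero (NeZero.ne M))), hζ.sum_pow_zpow, neg_mul,
    neg_eq_iff_add_eq_zero]
  by_cases h : p * a + b = 0
  · simp [h, inv_mul_cancel₀ (NeZero.ne (M : K))]
  · rw [if_neg (mt (Int.eq_zero_of_abs_lt_dvd · hab) h), if_neg h, mul_zero]

end RootsOfUnity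

section Spectrum

variable {𝕜 A : Type*} [Field 𝕜] [Ring A] [Algebra 𝕜 A]

theorem spectrum_subset_zero_one_of_pow_succ_eq_pow {a : A} {n : ℕ} (h : a ^ (n + 1) = a ^ n) :
    spectrum 𝕜 a ⊆ {0, 1} := by
  intro μ hμ
  have hp := spectrum.subset_polynomial_aeval a (Polynomial.X ^ (n + 1) - Polynomial.X ^ n)
    ⟨μ, hμ, rfl⟩
  have hroot : μ ^ n * (μ - 1) = 0 := by
    by_contra hne
    simp only [map_sub, Polynomial.aeval_X_pow, h, sub_self, Polynomial.eval_sub,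
      Polynomial.eval_pow, Polynomial.eval_X, spectrum.mem_iff, sub_zero] at hp
    refine hp ?_
    rw [← map_sub]
    exact (IsUnit.mk0 (μ ^ (n + 1) - μ ^ n) fun h0 => hne (by linear_combination h0)).map _
  rcases mul_eq_zero.1 hroot with h0 | h1
  · exact Or.inl (pow_eq_zero_iff'.1 h0).1
  · exact Or.inr (sub_eq_zero.1 h1)

end Spectrum

theorem Matrix.mem_spectrum_of_mulVec_eq_smul {n K : Type*} [Fintype n] [DecidableEq n] [Field K]
    {B : Matrix n n K} {v : n → K} {μ : K} (hv : v ≠ 0) (h : B *ᵥ v = μ • v) :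
    μ ∈ spectrum K B := by
  rw [← Matrix.spectrum_toLin', ← Module.End.hasEigenvalue_iff_mem_spectrum]
  exact Module.End.hasEigenvalue_of_hasEigenvector ⟨Module.End.mem_eigenspace_iff.2 h, hv⟩

theorem Int.mul_eq_iff_of_abs_lt {c x y : ℤ} (h : |y| < |c|) :
    c * x = y ↔ x = 0 ∧ y = 0 := by
  refine ⟨fun hxy => ?_, fun ⟨hx0, hy0⟩ => by rw [hx0, hy0, mul_zero]⟩
  by_contra hne
  have hx0 : x ≠ 0 := fun hx0 => hne ⟨hx0, by rw [← hxy, hx0, mul_zero]⟩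
  have : |c| ≤ |y| := by
    rw [← hxy, abs_mul]
    exact le_mul_of_one_le_right (abs_nonneg c) (Int.one_le_abs hx0)
  exact absurd h (not_lt.2 this)

theorem Function.Injective.sum_ite_eq_apply {ι α M : Type*} [Fintype ι] [DecidableEq α]
    [AddCommMonoid M] {e : ι → α} (he : Function.Injective e) (t : α) (g : α → M) :
    (∑ l, if t = e l then g (e l) else 0) = if t ∈ Set.range e then g t else 0 := by
  split_ifs with ht
  · obtain ⟨l, rfl⟩ := ht
    rw [sum_eq_single l (fun b _ hb => if_neg fun h => hb (he h).symm) (absurd (mem_univ l)),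
      if_pos rfl]
  · exact sum_eq_zero fun l _ => if_neg fun h => ht ⟨l, h.symm⟩

section IndexMapMatrix

variable {ι R : Type*} [Semiring R]

/-- With `e` labelling the basis `ψ_(e j)`, row `i` is the coordinate vector of `ψ_(φ (e i))`
(zero if `φ (e i)` leaves the window): for `φ = (c * ·)` this is the matrix of the Koopman
operator of `z ↦ z ^ c` on Fourier modes. -/
def indexMapMatrix (e : ι → ℤ) (φ : ℤ → ℤ) : Matrix ι ι R :=
  Matrix.of fun i j => if φ (e i) = e j then 1 else 0

@[simp]
theorem indexMapMatrix_apply (e : ι → ℤ) (φ : ℤ → ℤ) (i j : ι) :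
    (indexMapMatrix e φ : Matrix ι ι R) i j = if φ (e i) = e j then 1 else 0 :=
  rfl

variable {e : ι → ℤ}

theorem indexMapMatrix_id [DecidableEq ι] (he : Function.Injective e) :
    (indexMapMatrix e id : Matrix ι ι R) = 1 := by
  ext i j
  simp [Matrix.one_apply, he.eq_iff]

theorem indexMapMatrix_mul [Fintype ι] (he : Function.Injective e) {φ χ : ℤ → ℤ}
    (hχ : ∀ x, χ x ∈ Set.range e → x ∈ Set.range e) :
    indexMapMatrix e φ * indexMapMatrix e χ =
      (indexMapMatrix e (χ ∘ φ) : Matrix ι ι R) := by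
  ext i j
  simp only [Matrix.mul_apply, indexMapMatrix_apply, Function.comp_apply, ite_mul, one_mul,
    zero_mul]
  rw [he.sum_ite_eq_apply (φ (e i)) fun x => if χ x = e j then (1 : R) else 0]
  exact ite_eq_left_iff.2 fun h => (if_neg fun h' => h (hχ _ ⟨j, h'.symm⟩)).symm

theorem indexMapMatrix_pow [Fintype ι] [DecidableEq ι] (he : Function.Injective e)
    {φ : ℤ → ℤ} (hφ : ∀ x, φ x ∈ Set.range e → x ∈ Set.range e) (n : ℕ) :
    (indexMapMatrix e φ : Matrix ι ι R) ^ n = indexMapMatrix e φ^[n] := by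
  induction n with
  | zero => rw [pow_zero, Function.iterate_zero, indexMapMatrix_id he]
  | succ n ih => rw [pow_succ, ih, indexMapMatrix_mul he hφ, Function.iterate_succ']

theorem indexMapMatrix_mulVec_comp [Fintype ι] (he : Function.Injective e) (φ : ℤ → ℤ)
    {f : ℤ → R} (hf : ∀ x ∉ Set.range e, f x = 0) :
    indexMapMatrix e φ *ᵥ (f ∘ e) = f ∘ φ ∘ e := by
  funext i
  simp only [Matrix.mulVec, dotProduct, indexMapMatrix_apply, Function.comp_apply, ite_mul,
    one_mul, zero_mul]
  rw [he.sum_ite_eq_apply (φ (e i)) f]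
  exact ite_eq_left_iff.2 fun h => (hf _ h).symm

variable {N : ℕ} {c d : ℤ}
  (he : Function.Injective e) (hrange : Set.range e = Set.Icc (-N : ℤ) N)
include hrange

theorem mem_range_of_mul_mem_range (hc : c ≠ 0) (x : ℤ) (hx : c * x ∈ Set.range e) :
    x ∈ Set.range e := by
  rw [hrange, Set.mem_Icc, ← abs_le] at hx ⊢
  rw [abs_mul] at hx
  exact (le_mul_of_one_le_left (abs_nonneg x) (Int.one_le_abs hc)).trans hx

theorem abs_le_of_range_eq_Icc (i : ι) : |e i| ≤ N :=
  abs_le.2 (show e i ∈ Set.Icc (-N : ℤ) N from hrange ▸ Set.mem_range_self i)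

include he

omit hrange in
theorem indexMapMatrix_one_mul [DecidableEq ι] :
    (indexMapMatrix e (1 * ·) : Matrix ι ι R) = 1 := by
  rw [show ((1 : ℤ) * ·) = id from funext one_mul, indexMapMatrix_id he]

theorem indexMapMatrix_mul_left_mul [Fintype ι] (hd : d ≠ 0) :
    indexMapMatrix e (c * ·) * indexMapMatrix e (d * ·) =
      (indexMapMatrix e (d * c * ·) : Matrix ι ι R) := by
  rw [indexMapMatrix_mul he (mem_range_of_mul_mem_range hrange hd)]
  simp only [Function.comp_def, mul_assoc]

theorem indexMapMatrix_neg_one_mul_inv [Fintype ι] [DecidableEq ι] {K : Type*} [CommRing K] :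
    (indexMapMatrix e (-1 * ·) : Matrix ι ι K)⁻¹ = indexMapMatrix e (-1 * ·) := by
  refine Matrix.inv_eq_right_inv ?_
  rw [indexMapMatrix_mul_left_mul he hrange (by norm_num), neg_one_mul, neg_neg,
    indexMapMatrix_one_mul he]

theorem indexMapMatrix_mul_left_pow [Fintype ι] [DecidableEq ι] (hc : c ≠ 0) (n : ℕ) :
    (indexMapMatrix e (c * ·) : Matrix ι ι R) ^ n = indexMapMatrix e (c ^ n * ·) := by
  rw [indexMapMatrix_pow he (mem_range_of_mul_mem_range hrange hc), mul_left_iterate]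

theorem indexMapMatrix_mul_left_pow_succ [Fintype ι] [DecidableEq ι] (hc : 2 ≤ |c|) :
    (indexMapMatrix e (c * ·) : Matrix ι ι R) ^ (N + 1) = indexMapMatrix e (c * ·) ^ N := by
  have hbound := abs_le_of_range_eq_Icc hrange
  have hpow : ∀ n, N ≤ n → (N : ℤ) < |c ^ n| := fun n hn => by
    rw [abs_pow]
    calc (N : ℤ) < 2 ^ N := by exact_mod_cast Nat.lt_two_pow_self
      _ ≤ 2 ^ n := pow_le_pow_right₀ (by norm_num) hn
      _ ≤ |c| ^ n := pow_le_pow_left₀ (by norm_num) hc n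
  rw [indexMapMatrix_mul_left_pow he hrange (abs_pos.1 (by omega)),
    indexMapMatrix_mul_left_pow he hrange (abs_pos.1 (by omega))]
  ext i j
  simp only [indexMapMatrix_apply,
    Int.mul_eq_iff_of_abs_lt ((hbound j).trans_lt (hpow _ le_rfl)),
    Int.mul_eq_iff_of_abs_lt ((hbound j).trans_lt (hpow _ (Nat.le_succ N)))]

theorem indexMapMatrix_mul_left_mulVec_indicator_zero [Fintype ι] (hc : c ≠ 0) :
    (indexMapMatrix e (c * ·) : Matrix ι ι R) *ᵥ (fun j => if e j = 0 then 1 else 0) =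
      fun j => if e j = 0 then 1 else 0 := by
  have hzero : (0 : ℤ) ∈ Set.range e := hrange ▸ ⟨by omega, by omega⟩
  have := indexMapMatrix_mulVec_comp he (c * ·) (f := fun x : ℤ => if x = 0 then (1 : R) else 0)
    fun x hx => if_neg (by rintro rfl; exact hx hzero)
  simpa [Function.comp_def, hc] using this

end IndexMapMatrix

theorem Fin.range_val_sub (N : ℕ) :
    Set.range (fun i : Fin (2 * N + 1) => (i : ℤ) - N) = Set.Icc (-N : ℤ) N := by
  ext x
  constructor
  · rintro ⟨i, rfl⟩
    have := i.isLt
    dsimp only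
    constructor <;> omega
  · rintro ⟨h₁, h₂⟩
    exact ⟨⟨(x + N).toNat, by omega⟩, by simp; omega⟩

theorem Fin.val_sub_injective (N : ℕ) :
    Function.Injective (fun i : Fin (2 * N + 1) => (i : ℤ) - N) :=
  fun i j h => Fin.ext (by simpa using h)

/-- EDMD for the Bernoulli doubling map `τ(z) = z²` with Fourier observables
`ψ_k(z) = z^k`, `-Nb ≤ k ≤ Nb` (`N = 2Nb+1` observables, indexed by `Fin N`
via `k = i - Nb`), and `M ≥ 3N/2` equidistant nodes: the matrix
`A = G * H⁻¹` has entries `A_{kl} = δ_{2k,l}`; consequently its spectrum is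
contained in `{0, 1}`, `1` is an eigenvalue with eigenvector the coordinate
vector of the constant observable `ψ_0`, and every eigenvalue is `0` or `1`. -/
theorem edmd_A_doubling (Nb M : ℕ) (hM : 3 * (2 * Nb + 1) ≤ 2 * M)
    (τ : ℂ → ℂ) (hτ : ∀ z, τ z = z ^ 2)
    (ψ : ℤ → ℂ → ℂ) (hψ : ∀ k z, ψ k z = z ^ k)
    (z : ℕ → ℂ) (hz : ∀ m, z m = Complex.exp (2 * Real.pi * I * m / M))
    (e : Fin (2 * Nb + 1) → ℤ) (he : ∀ i, e i = (i : ℤ) - Nb)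
    (G H A : Matrix (Fin (2 * Nb + 1)) (Fin (2 * Nb + 1)) ℂ)
    (hG : ∀ i j, G i j =
      (M : ℂ)⁻¹ * ∑ m ∈ Finset.range M, ψ (e i) (τ (z m)) * ψ (e j) (z m))
    (hH : ∀ i j, H i j =
      (M : ℂ)⁻¹ * ∑ m ∈ Finset.range M, ψ (e i) (z m) * ψ (e j) (z m))
    (hA : A = G * H⁻¹) :
    (∀ i j, A i j = if 2 * e i = e j then 1 else 0) ∧
    spectrum ℂ A ⊆ {0, 1} ∧
    A.mulVec (fun j => if e j = 0 then 1 else 0)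
      = (fun j => if e j = 0 then 1 else 0) ∧
    (1 : ℂ) ∈ spectrum ℂ A := by
  have : NeZero M := ⟨by omega⟩
  have hζ := isPrimitiveRoot_exp M (NeZero.ne M)
  have hz' : ∀ m : ℕ, z m = exp (2 * Real.pi * I / M) ^ m := fun m => by
    rw [hz, ← exp_nat_mul]; ring_nf
  have he' : e = fun i : Fin (2 * Nb + 1) => (i : ℤ) - Nb := funext he
  have hrange : Set.range e = Set.Icc (-Nb : ℤ) Nb := he' ▸ Fin.range_val_sub Nb
  have hinj : e.Injective := he' ▸ Fin.val_sub_injective Nb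
  have hbound := abs_le_of_range_eq_Icc hrange
  have hH' : H = indexMapMatrix e (-1 * ·) := by
    ext i j
    simpa [hH, hψ, hz'] using
      hζ.inv_mul_sum_pow_zpow_mul_zpow 1 (hbound i) (hbound j) (by omega)
  have hG' : G = indexMapMatrix e (-2 * ·) := by
    ext i j
    simpa [hG, hψ, hτ, hz'] using
      hζ.inv_mul_sum_pow_zpow_mul_zpow 2 (hbound i) (hbound j) (by omega)
  have hA' : A = indexMapMatrix e (2 * ·) := by
    rw [hA, hH', indexMapMatrix_neg_one_mul_inv hinj hrange, hG',
      indexMapMatrix_mul_left_mul hinj hrange (by norm_num)]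
    norm_num
  have hvec := indexMapMatrix_mul_left_mulVec_indicator_zero (R := ℂ) hinj hrange two_ne_zero
  rw [← hA'] at hvec
  obtain ⟨i₀, hi₀⟩ : (0 : ℤ) ∈ Set.range e := hrange ▸ ⟨by omega, by omega⟩
  refine ⟨fun i j => by rw [hA']; rfl, spectrum_subset_zero_one_of_pow_succ_eq_pow
    (hA' ▸ indexMapMatrix_mul_left_pow_succ hinj hrange (by norm_num)), hvec,
    Matrix.mem_spectrum_of_mulVec_eq_smul (fun h => ?_) (by rw [hvec, one_smul])⟩
  simpa [hi₀] using congrFun h i₀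
end

section
/- Let f : [0,2π] → ℂ be the restriction to the unit circle (in angular coordinates) of a function holomorphic on an open annulus {z : r < |z| < R} with r < 1 < R. Then the equidistant quadrature error decays exponentially: |(1/M) Σ_{m=0}^{M-1} f(2πm/M) − (1/2π) ∫₀^{2π} f(φ) dφ| = O(ρ^M) as M → ∞, for any ρ with max(r, 1/R) < ρ < 1. -/
/-!
For `w` on the unit circle, the Cauchy integral formula on the annulus `ρ ≤ ‖z‖ ≤ ρ⁻¹` reads
`2πi F(w) = ∮_{‖z‖=ρ⁻¹} F(z)/(z-w) dz - ∮_{‖z‖=ρ} F(z)/(z-w) dz`. Summed over the `M`-th roots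
of unity, the kernel becomes the logarithmic derivative of `z^M - 1`,
`∑ₘ (z - ζ^m)⁻¹ = M z^(M-1)/(z^M - 1)`, and the mean value `(2πi)⁻¹ ∮ F(z)/z dz` may be taken on
the outer circle as well. This leaves the kernel `M/(z(z^M - 1))` on `‖z‖ = ρ⁻¹` and
`M z^(M-1)/(z^M - 1)` on `‖z‖ = ρ`; both circle integrals are `O(M ρ^M)`, so after dividing by
`2πM` the quadrature error is `O(ρ^M)`.
-/

open Complex Metric Set
open scoped Real

theorem sphere_subset_closedBall_sdiff_ball {X : Type*} [PseudoMetricSpace X] {x : X}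
    {r R t : ℝ} (hr : r ≤ t) (hR : t ≤ R) : sphere x t ⊆ closedBall x R \ ball x r :=
  fun _ hz => ⟨(mem_sphere.1 hz).le.trans hR,
    fun h => (mem_ball.1 h).not_ge (hr.trans (mem_sphere.1 hz).ge)⟩

theorem IsPrimitiveRoot.sum_inv_sub_pow {𝕜 : Type*} [NontriviallyNormedField 𝕜] {ζ : 𝕜} {M : ℕ}
    (hζ : IsPrimitiveRoot ζ M) (hM : 0 < M) {z : 𝕜} (hz : z ^ M ≠ 1) :
    ∑ i ∈ Finset.range M, (z - ζ ^ i)⁻¹ = M * z ^ (M - 1) / (z ^ M - 1) := by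
  have hprod : (fun x : 𝕜 => ∏ i ∈ Finset.range M, (x - ζ ^ i)) = fun x => x ^ M - 1 := by
    funext x
    simpa [Polynomial.eval_prod] using
      (congrArg (Polynomial.eval x) (X_pow_sub_C_eq_prod hζ hM (one_pow M))).symm
  have hne : ∀ i ∈ Finset.range M, z - ζ ^ i ≠ 0 := by
    rw [← Finset.prod_ne_zero_iff, congrFun hprod z]
    exact sub_ne_zero.2 hz
  calc ∑ i ∈ Finset.range M, (z - ζ ^ i)⁻¹
      = ∑ i ∈ Finset.range M, logDeriv (fun x => x - ζ ^ i) z := by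
        simp [logDeriv_apply, div_eq_inv_mul]
    _ = logDeriv (fun x => x ^ M - 1) z := by
        rw [← logDeriv_prod hne (fun i _ => by fun_prop), hprod]
    _ = M * z ^ (M - 1) / (z ^ M - 1) := by simp [logDeriv_apply]

theorem pow_ne_one_of_mem_sphere {t : ℝ} (ht : t ≠ 1) {M : ℕ} (hM : M ≠ 0) {z : ℂ}
    (hz : z ∈ sphere (0 : ℂ) t) : z ^ M ≠ 1 := fun h => by
  have := congrArg norm h
  rw [norm_pow, norm_one, pow_eq_one_iff_of_nonneg (norm_nonneg z) hM] at this
  exact ht (by simpa [this] using (mem_sphere_zero_iff_norm.1 hz).symm)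

theorem norm_natCast_div_mul_pow_sub_one_le {z : ℂ} {R : ℝ} (hR : 1 < R) (hz : ‖z‖ = R)
    (M : ℕ) (hM : M ≠ 0) :
    ‖(M : ℂ) / (z * (z ^ M - 1))‖ ≤ M / (R * (R ^ M - 1)) := by
  have hRM : 0 < R ^ M - 1 := sub_pos.2 (one_lt_pow₀ hR hM)
  have hlow : R ^ M - 1 ≤ ‖z ^ M - 1‖ := by
    simpa [norm_pow, hz] using norm_sub_norm_le (z ^ M) 1
  rw [norm_div, norm_mul, Complex.norm_natCast, hz]
  gcongr

theorem norm_natCast_mul_pow_div_pow_sub_one_le {z : ℂ} {r : ℝ} (hr : r < 1) (hz : ‖z‖ = r)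
    (M : ℕ) (hM : M ≠ 0) :
    ‖(M : ℂ) * z ^ (M - 1) / (z ^ M - 1)‖ ≤ M * r ^ (M - 1) / (1 - r ^ M) := by
  have hr0 : 0 ≤ r := hz ▸ norm_nonneg z
  have hrM : 0 < 1 - r ^ M := sub_pos.2 (pow_lt_one₀ hr0 hr hM)
  have hlow : 1 - r ^ M ≤ ‖z ^ M - 1‖ := by
    simpa [norm_pow, hz, norm_sub_rev] using norm_sub_norm_le 1 (z ^ M)
  rw [norm_div, norm_mul, norm_pow, Complex.norm_natCast, hz]
  gcongr

theorem natCast_mul_pow_div_pow_sub_one_sub_natCast_div {K : Type*} [Field K] {M : ℕ}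
    (hM : M ≠ 0) {z : K} (hz : z ≠ 0) (hzM : z ^ M - 1 ≠ 0) :
    M * z ^ (M - 1) / (z ^ M - 1) - M / z = M / (z * (z ^ M - 1)) := by
  obtain ⟨N, rfl⟩ := Nat.exists_eq_add_one_of_ne_zero hM
  rw [Nat.add_sub_cancel]
  field_simp
  ring

variable {E : Type*} [NormedAddCommGroup E] [NormedSpace ℂ E]

theorem norm_circleIntegral_smul_le {k : ℂ → ℂ} {F : ℂ → E} {c : ℂ} {t K B : ℝ} (ht : 0 ≤ t)
    (hk : ∀ z ∈ sphere c t, ‖k z‖ ≤ K) (hF : ∀ z ∈ sphere c t, ‖F z‖ ≤ B) :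
    ‖∮ z in C(c, t), k z • F z‖ ≤ 2 * π * t * (K * B) :=
  circleIntegral.norm_integral_le_of_norm_le_const ht fun z hz => (norm_smul _ _).trans_le <|
    mul_le_mul (hk z hz) (hF z hz) (norm_nonneg _) ((norm_nonneg _).trans (hk z hz))

theorem IsPrimitiveRoot.sum_circleIntegral_inv_sub_pow_smul {ζ : ℂ} {M : ℕ}
    (hζ : IsPrimitiveRoot ζ M) (hM : 0 < M) {F : ℂ → E} {t : ℝ} (ht0 : 0 ≤ t) (ht1 : t ≠ 1)
    (hF : ContinuousOn F (sphere 0 t)) :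
    ∑ m ∈ Finset.range M, (∮ z in C(0, t), (z - ζ ^ m)⁻¹ • F z)
      = ∮ z in C(0, t), (M * z ^ (M - 1) / (z ^ M - 1)) • F z := by
  have hpow : ∀ z ∈ sphere (0 : ℂ) t, z ^ M ≠ 1 := fun z => pow_ne_one_of_mem_sphere ht1 hM.ne'
  have hne : ∀ m, ∀ z ∈ sphere (0 : ℂ) t, z - ζ ^ m ≠ 0 := fun m z hz h => hpow z hz <| by
    rw [sub_eq_zero.1 h, ← pow_mul, mul_comm, pow_mul, hζ.pow_eq_one, one_pow]
  have hint : ∀ m ∈ Finset.range M, CircleIntegrable (fun z => (z - ζ ^ m)⁻¹ • F z) 0 t :=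
    fun m _ => ((continuousOn_id.sub continuousOn_const).inv₀ (hne m)).smul hF
      |>.circleIntegrable ht0
  rw [← circleIntegral.integral_fun_sum hint]
  refine circleIntegral.integral_congr ht0 fun z hz => ?_
  simp only [← Finset.sum_smul, hζ.sum_inv_sub_pow hM (hpow z hz)]

theorem two_pi_I_smul_circleAverage_eq_circleIntegral_of_differentiable_on_annulus {c : ℂ}
    {r R : ℝ} {F : ℂ → E} (h0 : 0 < r) (hle : r ≤ R)
    (hc : ContinuousOn F (closedBall c R \ ball c r))
    (hd : ∀ z ∈ ball c R \ closedBall c r, DifferentiableAt ℂ F z) :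
    (2 * π * I : ℂ) • Real.circleAverage F c r = ∮ z in C(c, R), (z - c)⁻¹ • F z := by
  rw [Real.circleAverage_eq_circleIntegral h0.ne', smul_inv_smul₀ two_pi_I_ne_zero]
  exact (circleIntegral_sub_center_inv_smul_eq_of_differentiable_on_annulus_off_countable h0 hle
    countable_empty hc fun z hz => hd z hz.1).symm

theorem circleIntegral_natCast_div_mul_pow_sub_one_smul {F : ℂ → E} {R : ℝ} (hR : 1 < R)
    {M : ℕ} (hM : M ≠ 0) (hF : ContinuousOn F (sphere 0 R)) :
    (∮ z in C(0, R), (M / (z * (z ^ M - 1))) • F z)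
      = (∮ z in C(0, R), (M * z ^ (M - 1) / (z ^ M - 1)) • F z)
        - (M : ℂ) • ∮ z in C(0, R), z⁻¹ • F z := by
  have hR0 : 0 ≤ R := zero_le_one.trans hR.le
  have hpow : ∀ z ∈ sphere (0 : ℂ) R, z ^ M - 1 ≠ 0 := fun z hz =>
    sub_ne_zero.2 (pow_ne_one_of_mem_sphere hR.ne' hM hz)
  have hz0 : ∀ z ∈ sphere (0 : ℂ) R, z ≠ 0 := fun z hz =>
    ne_of_mem_sphere hz (zero_lt_one.trans hR).ne'
  rw [← circleIntegral.integral_smul, ← circleIntegral.integral_sub]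
  · refine circleIntegral.integral_congr hR0 fun z hz => ?_
    rw [smul_smul, ← sub_smul, ← div_eq_mul_inv,
      natCast_mul_pow_div_pow_sub_one_sub_natCast_div hM (hz0 z hz) (hpow z hz)]
  · exact ((continuousOn_const.mul (continuousOn_pow _)).div
      ((continuousOn_pow M).sub continuousOn_const) hpow).smul hF |>.circleIntegrable hR0
  · exact (continuousOn_const.smul ((continuousOn_id.inv₀ hz0).smul hF)).circleIntegrable hR0

variable [CompleteSpace E]

theorem circleIntegral_sub_inv_of_notMem_closedBall {c w : ℂ} {R : ℝ} (hR : 0 ≤ R)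
    (hw : w ∉ closedBall c R) : (∮ z in C(c, R), (z - w)⁻¹) = 0 := by
  have hne : ∀ z ∈ closedBall c R, z - w ≠ 0 := fun z hz h => hw (sub_eq_zero.1 h ▸ hz)
  exact circleIntegral_eq_zero_of_differentiable_on_off_countable hR countable_empty
    ((continuousOn_id.sub continuousOn_const).inv₀ hne)
    fun z hz => ((differentiableAt_id.sub_const w).inv (hne z (ball_subset_closedBall hz.1)))

theorem circleIntegral_sub_inv_smul_sub_of_differentiable_on_annulus {c w : ℂ} {r R : ℝ}
    {f : ℂ → E} (h0 : 0 < r) (hw : w ∈ ball c R \ closedBall c r)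
    (hc : ContinuousOn f (closedBall c R \ ball c r))
    (hd : ∀ z ∈ ball c R \ closedBall c r, DifferentiableAt ℂ f z) :
    (∮ z in C(c, R), (z - w)⁻¹ • f z) - (∮ z in C(c, r), (z - w)⁻¹ • f z)
      = (2 * π * I : ℂ) • f w := by
  have hrw : r < dist w c := not_le.1 hw.2
  have hle : r ≤ R := hrw.le.trans (mem_ball.1 hw.1).le
  have hsub : ball c R \ closedBall c r ⊆ closedBall c R \ ball c r :=
    sdiff_subset_sdiff ball_subset_closedBall ball_subset_closedBall
  have hopen : IsOpen (ball c R \ closedBall c r) := isOpen_ball.sdiff isClosed_closedBall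
  have hcF : ContinuousOn (dslope f w) (closedBall c R \ ball c r) :=
    (continuousOn_dslope (Filter.mem_of_superset (hopen.mem_nhds hw) hsub)).2 ⟨hc, hd w hw⟩
  have hdF : ∀ z ∈ (ball c R \ closedBall c r) \ {w}, DifferentiableAt ℂ (dslope f w) z :=
    fun z hz => (differentiableAt_dslope_of_ne hz.2).2 (hd z hz.1)
  have HI := circleIntegral_eq_of_differentiable_on_annulus_off_countable h0 hle
    (countable_singleton w) hcF hdF
  have hsplit : ∀ t, 0 ≤ t → sphere c t ⊆ closedBall c R \ ball c r → w ∉ sphere c t →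
      (∮ z in C(c, t), dslope f w z)
        = (∮ z in C(c, t), (z - w)⁻¹ • f z) - (∮ z in C(c, t), (z - w)⁻¹) • f w := by
    intro t ht hts hwt
    have hne : ∀ z ∈ sphere c t, z ≠ w := fun z hz h => hwt (h ▸ hz)
    have hinv : ContinuousOn (fun z => (z - w)⁻¹) (sphere c t) :=
      (continuousOn_id.sub continuousOn_const).inv₀ fun z hz => sub_ne_zero.2 (hne z hz)
    rw [← circleIntegral.integral_smul_const, ← circleIntegral.integral_sub
      (f := fun z => (z - w)⁻¹ • f z) (g := fun z => (z - w)⁻¹ • f w)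
      ((hinv.smul (hc.mono hts)).circleIntegrable ht)
      ((hinv.smul continuousOn_const).circleIntegrable ht)]
    refine circleIntegral.integral_congr ht fun z hz => ?_
    simp only [dslope_of_ne f (hne z hz), slope, vsub_eq_sub, smul_sub]
  have hR : ∮ z in C(c, R), (z - w)⁻¹ = 2 * π * I :=
    circleIntegral.integral_sub_inv_of_mem_ball hw.1
  have hr : ∮ z in C(c, r), (z - w)⁻¹ = 0 :=
    circleIntegral_sub_inv_of_notMem_closedBall h0.le hw.2
  rw [hsplit R (h0.le.trans hle) (sphere_subset_closedBall_sdiff_ball hle le_rfl)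
      (fun h => (mem_ball.1 hw.1).ne (mem_sphere.1 h)),
    hsplit r h0.le (sphere_subset_closedBall_sdiff_ball le_rfl hle)
      (fun h => hrw.ne' (mem_sphere.1 h)), hR, hr] at HI
  rw [sub_eq_iff_eq_add, ← sub_eq_iff_eq_add']
  simpa using HI

theorem IsPrimitiveRoot.two_pi_I_smul_sum_sub_circleAverage {ζ : ℂ} {M : ℕ}
    (hζ : IsPrimitiveRoot ζ M) (hM : 0 < M) {F : ℂ → E} {r R : ℝ} (hr0 : 0 < r) (hr : r < 1)
    (hR : 1 < R) (hc : ContinuousOn F (closedBall 0 R \ ball 0 r))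
    (hd : ∀ z ∈ ball 0 R \ closedBall 0 r, DifferentiableAt ℂ F z) :
    (2 * π * I : ℂ) • (∑ m ∈ Finset.range M, F (ζ ^ m) - (M : ℂ) • Real.circleAverage F 0 1)
      = (∮ z in C(0, R), (M / (z * (z ^ M - 1))) • F z)
        - ∮ z in C(0, r), (M * z ^ (M - 1) / (z ^ M - 1)) • F z := by
  have hR0 : 0 ≤ R := zero_le_one.trans hR.le
  have hsR : sphere (0 : ℂ) R ⊆ closedBall 0 R \ ball 0 r :=
    sphere_subset_closedBall_sdiff_ball (hr.trans hR).le le_rfl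
  have hsr : sphere (0 : ℂ) r ⊆ closedBall 0 R \ ball 0 r :=
    sphere_subset_closedBall_sdiff_ball le_rfl (hr.trans hR).le
  have hcauchy : ∀ m, (2 * π * I : ℂ) • F (ζ ^ m)
      = (∮ z in C(0, R), (z - ζ ^ m)⁻¹ • F z) - ∮ z in C(0, r), (z - ζ ^ m)⁻¹ • F z := by
    intro m
    have hnorm : ‖ζ ^ m‖ = 1 := by rw [norm_pow, hζ.norm'_eq_one hM.ne', one_pow]
    refine (circleIntegral_sub_inv_smul_sub_of_differentiable_on_annulus hr0 ⟨?_, ?_⟩ hc hd).symm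
    · rwa [mem_ball_zero_iff, hnorm]
    · rwa [mem_closedBall_zero_iff, hnorm, not_le]
  have hmean : (2 * π * I : ℂ) • Real.circleAverage F 0 1 = ∮ z in C(0, R), z⁻¹ • F z := by
    simpa using two_pi_I_smul_circleAverage_eq_circleIntegral_of_differentiable_on_annulus
      one_pos hR.le (hc.mono (sdiff_subset_sdiff_right (ball_subset_ball hr.le)))
      fun z hz => hd z ⟨hz.1, fun h => hz.2 (closedBall_subset_closedBall hr.le h)⟩
  calc (2 * π * I : ℂ) • (∑ m ∈ Finset.range M, F (ζ ^ m) - (M : ℂ) • Real.circleAverage F 0 1)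
      = ∑ m ∈ Finset.range M, (2 * π * I : ℂ) • F (ζ ^ m)
          - (M : ℂ) • (2 * π * I : ℂ) • Real.circleAverage F 0 1 := by
        rw [smul_sub, Finset.smul_sum, smul_comm]
    _ = (∮ z in C(0, R), (M * z ^ (M - 1) / (z ^ M - 1)) • F z)
          - (∮ z in C(0, r), (M * z ^ (M - 1) / (z ^ M - 1)) • F z)
          - (M : ℂ) • ∮ z in C(0, R), z⁻¹ • F z := by
        simp only [hcauchy, Finset.sum_sub_distrib, hmean,
          hζ.sum_circleIntegral_inv_sub_pow_smul hM hR0 hR.ne' (hc.mono hsR),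
          hζ.sum_circleIntegral_inv_sub_pow_smul hM hr0.le hr.ne (hc.mono hsr)]
    _ = _ := by
        rw [sub_right_comm, circleIntegral_natCast_div_mul_pow_sub_one_smul hR hM.ne' (hc.mono hsR)]

theorem IsPrimitiveRoot.norm_inv_smul_sum_sub_circleAverage_le {ζ : ℂ} {M : ℕ}
    (hζ : IsPrimitiveRoot ζ M) (hM : 0 < M) {F : ℂ → E} {r R B : ℝ} (hr0 : 0 < r) (hr : r < 1)
    (hR : 1 < R) (hc : ContinuousOn F (closedBall 0 R \ ball 0 r))
    (hd : ∀ z ∈ ball 0 R \ closedBall 0 r, DifferentiableAt ℂ F z)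
    (hB : ∀ z ∈ closedBall 0 R \ ball 0 r, ‖F z‖ ≤ B) :
    ‖(M : ℂ)⁻¹ • ∑ m ∈ Finset.range M, F (ζ ^ m) - Real.circleAverage F 0 1‖
      ≤ B * (r ^ M / (1 - r ^ M) + 1 / (R ^ M - 1)) := by
  have hR0 : 0 ≤ R := zero_le_one.trans hR.le
  have hM0 : (M : ℂ) ≠ 0 := Nat.cast_ne_zero.2 hM.ne'
  have houter : ‖∮ z in C(0, R), (M / (z * (z ^ M - 1))) • F z‖
      ≤ 2 * π * R * (M / (R * (R ^ M - 1)) * B) :=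
    norm_circleIntegral_smul_le hR0
      (fun z hz => norm_natCast_div_mul_pow_sub_one_le hR (mem_sphere_zero_iff_norm.1 hz) M hM.ne')
      fun z hz => hB z (sphere_subset_closedBall_sdiff_ball (hr.trans hR).le le_rfl hz)
  have hinner : ‖∮ z in C(0, r), (M * z ^ (M - 1) / (z ^ M - 1)) • F z‖
      ≤ 2 * π * r * (M * r ^ (M - 1) / (1 - r ^ M) * B) :=
    norm_circleIntegral_smul_le hr0.le
      (fun z hz => norm_natCast_mul_pow_div_pow_sub_one_le hr (mem_sphere_zero_iff_norm.1 hz) M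
        hM.ne')
      fun z hz => hB z (sphere_subset_closedBall_sdiff_ball le_rfl (hr.trans hR).le hz)
  have herror : (M : ℂ)⁻¹ • ∑ m ∈ Finset.range M, F (ζ ^ m) - Real.circleAverage F 0 1
      = ((2 * π * I : ℂ) * M)⁻¹ • ((∮ z in C(0, R), (M / (z * (z ^ M - 1))) • F z)
        - ∮ z in C(0, r), (M * z ^ (M - 1) / (z ^ M - 1)) • F z) := by
    rw [← hζ.two_pi_I_smul_sum_sub_circleAverage hM hr0 hr hR hc hd, smul_smul, mul_inv_rev,
      mul_assoc, inv_mul_cancel₀ two_pi_I_ne_zero, mul_one, smul_sub, smul_smul,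
      inv_mul_cancel₀ hM0, one_smul]
  have hnorm : ‖((2 * π * I : ℂ) * M)⁻¹‖ = (2 * π * M)⁻¹ := by
    simp [abs_of_pos Real.pi_pos]
  rw [herror, norm_smul, hnorm]
  calc (2 * π * M)⁻¹ * ‖(∮ z in C(0, R), (M / (z * (z ^ M - 1))) • F z)
        - ∮ z in C(0, r), (M * z ^ (M - 1) / (z ^ M - 1)) • F z‖
      ≤ (2 * π * M)⁻¹ * (2 * π * R * (M / (R * (R ^ M - 1)) * B)
          + 2 * π * r * (M * r ^ (M - 1) / (1 - r ^ M) * B)) := by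
        gcongr
        exact (norm_sub_le _ _).trans (add_le_add houter hinner)
    _ = B * (r ^ M / (1 - r ^ M) + 1 / (R ^ M - 1)) := by
        rw [← mul_pow_sub_one hM.ne' r]
        field_simp
        ring

theorem pow_div_one_sub_pow_add_one_div_inv_pow_sub_one_le {ρ : ℝ} (h0 : 0 < ρ) (h1 : ρ < 1)
    {M : ℕ} (hM : M ≠ 0) : ρ ^ M / (1 - ρ ^ M) + 1 / (ρ⁻¹ ^ M - 1) ≤ 2 / (1 - ρ) * ρ ^ M := by
  have hρM : ρ ^ M ≤ ρ := pow_le_of_le_one h0.le h1.le hM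
  have hpos : 0 < 1 - ρ ^ M := by linarith
  have hinv : 1 / (ρ⁻¹ ^ M - 1) = ρ ^ M / (1 - ρ ^ M) := by
    rw [inv_pow, div_eq_div_iff (sub_ne_zero.2 (one_lt_inv₀ (pow_pos h0 M) |>.2
      (pow_lt_one₀ h0.le h1 hM)).ne') hpos.ne']
    field_simp
  rw [hinv, ← two_mul, div_mul_eq_mul_div, mul_div_assoc]
  gcongr

theorem exists_norm_inv_smul_sum_sub_circleAverage_le {F : ℂ → E} {U : Set ℂ} {ρ : ℝ}
    (hρ0 : 0 < ρ) (hρ1 : ρ < 1) (hU : IsOpen U) (hF : DifferentiableOn ℂ F U)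
    (hsub : closedBall 0 ρ⁻¹ \ ball 0 ρ ⊆ U) :
    ∃ C : ℝ, ∀ M : ℕ, 0 < M →
      ‖(M : ℂ)⁻¹ • ∑ m ∈ Finset.range M, F (exp (2 * π * I / M) ^ m)
        - Real.circleAverage F 0 1‖ ≤ C * ρ ^ M := by
  have hρ1' : 1 < ρ⁻¹ := one_lt_inv₀ hρ0 |>.2 hρ1
  have hc : ContinuousOn F (closedBall 0 ρ⁻¹ \ ball 0 ρ) := hF.continuousOn.mono hsub
  have hd : ∀ z ∈ ball (0 : ℂ) ρ⁻¹ \ closedBall 0 ρ, DifferentiableAt ℂ F z := fun z hz =>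
    hF.differentiableAt <| hU.mem_nhds <|
      hsub (sdiff_subset_sdiff ball_subset_closedBall ball_subset_closedBall hz)
  obtain ⟨B, hB⟩ := ((isCompact_closedBall _ _).diff isOpen_ball).exists_bound_of_continuousOn hc
  have hB0 : 0 ≤ B := (norm_nonneg _).trans <| hB ρ <|
    sphere_subset_closedBall_sdiff_ball le_rfl (hρ1.trans hρ1').le (by simp [hρ0.le])
  refine ⟨2 * B / (1 - ρ), fun M hM => ?_⟩
  calc _ ≤ _ := (isPrimitiveRoot_exp M hM.ne').norm_inv_smul_sum_sub_circleAverage_le hM hρ0 hρ1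
        hρ1' hc hd hB
    _ ≤ B * (2 / (1 - ρ) * ρ ^ M) := by
      gcongr
      exact pow_div_one_sub_pow_add_one_div_inv_pow_sub_one_le hρ0 hρ1 hM.ne'
    _ = 2 * B / (1 - ρ) * ρ ^ M := by ring

theorem circleAverage_zero_one_eq_integral_exp (F : ℂ → ℂ) :
    Real.circleAverage F 0 1 = (2 * π)⁻¹ * ∫ φ in (0 : ℝ)..(2 * π), F (exp (I * φ)) := by
  simp [Real.circleAverage_def, circleMap, mul_comm I, Complex.real_smul]

theorem exp_two_pi_I_div_pow (M m : ℕ) :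
    exp (2 * π * I / M) ^ m = exp (I * ↑(2 * π * m / M)) := by
  rw [← exp_nat_mul]
  push_cast
  ring_nf

theorem equidistant_quadrature_analytic_general (r R : ℝ) (hR : 1 < R)
    (F : ℂ → ℂ) (hF : DifferentiableOn ℂ F {z : ℂ | r < ‖z‖ ∧ ‖z‖ < R})
    (f : ℝ → ℂ) (hf : ∀ φ, f φ = F (Complex.exp (I * φ)))
    (ρ : ℝ) (hρ₁ : max r R⁻¹ < ρ) (hρ₂ : ρ < 1) :
    ∃ C : ℝ, ∀ M : ℕ, 1 ≤ M →
      ‖((M : ℂ)⁻¹ * ∑ m ∈ Finset.range M, f (2 * Real.pi * m / M)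
        - (2 * Real.pi)⁻¹ * ∫ φ in (0 : ℝ)..(2 * Real.pi), f φ)‖
        ≤ C * ρ ^ M := by
  obtain ⟨hrρ, hRρ⟩ := max_lt_iff.1 hρ₁
  have hρ0 : 0 < ρ := (inv_pos.2 (zero_lt_one.trans hR)).trans hRρ
  have hρR : ρ⁻¹ < R := (inv_lt_comm₀ (zero_lt_one.trans hR) hρ0).1 hRρ
  have hopen : IsOpen {z : ℂ | r < ‖z‖ ∧ ‖z‖ < R} :=
    (isOpen_lt continuous_const continuous_norm).inter (isOpen_lt continuous_norm continuous_const)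
  have hann : closedBall (0 : ℂ) ρ⁻¹ \ ball 0 ρ ⊆ {z : ℂ | r < ‖z‖ ∧ ‖z‖ < R} := fun z hz =>
    ⟨hrρ.trans_le (by simpa using hz.2), (mem_closedBall_zero_iff.1 hz.1).trans_lt hρR⟩
  obtain ⟨C, hC⟩ := exists_norm_inv_smul_sum_sub_circleAverage_le hρ0 hρ₂ hopen hF hann
  refine ⟨C, fun M hM => ?_⟩
  have hquad : ∑ m ∈ Finset.range M, f (2 * Real.pi * m / M)
      = ∑ m ∈ Finset.range M, F (exp (2 * π * I / M) ^ m) := by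
    simp only [hf, exp_two_pi_I_div_pow]
  have hmean : (2 * Real.pi)⁻¹ * ∫ φ in (0 : ℝ)..(2 * Real.pi), f φ
      = Real.circleAverage F 0 1 := by
    simp only [hf, circleAverage_zero_one_eq_integral_exp]
  rw [hquad, hmean, ← smul_eq_mul]
  exact hC M hM

/-- Exponential decay of the equidistant quadrature error for the boundary
restriction of a function holomorphic on an annulus `{r < |z| < R}` with
`r < 1 < R`: for any `ρ` with `max(r, 1/R) < ρ < 1` the error of the
`M`-point rule is `O(ρ^M)`. -/
theorem equidistant_quadrature_analytic (r R : ℝ) (hr : r < 1) (hR : 1 < R)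
    (hr0 : 0 ≤ r)
    (F : ℂ → ℂ) (hF : DifferentiableOn ℂ F {z : ℂ | r < ‖z‖ ∧ ‖z‖ < R})
    (f : ℝ → ℂ) (hf : ∀ φ, f φ = F (Complex.exp (I * φ)))
    (ρ : ℝ) (hρ₁ : max r R⁻¹ < ρ) (hρ₂ : ρ < 1) :
    ∃ C : ℝ, ∀ M : ℕ, 1 ≤ M →
      ‖((M : ℂ)⁻¹ * ∑ m ∈ Finset.range M, f (2 * Real.pi * m / M)
        - (2 * Real.pi)⁻¹ * ∫ φ in (0 : ℝ)..(2 * Real.pi), f φ)‖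
        ≤ C * ρ ^ M :=
  equidistant_quadrature_analytic_general r R hR F hF f hf ρ hρ₁ hρ₂
end

section
/- Suppose additionally that the index set and sample values are closed under conjugation: for each row index i there is a row index j with (X)_{jm} = conj((X)_{im}) and (Y)_{jm} = conj((Y)_{im}) for all m. Then the least-squares EDMD matrix satisfies A = Y X^H (X X^H)^{−1} = (Y X^T)(X X^T)^{−1} = G H^{−1}, where G = (1/M) Y X^T and H = (1/M) X X^T, assuming X X^T is invertible. -/
open Complex Matrix

/-- If the rows of the EDMD data matrices are closed under complex
conjugation (for each row index `i` there is a row index `j` whose entries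
are the conjugates of those of row `i`, simultaneously in `X` and `Y`), then
the least-squares EDMD matrix satisfies
`A = Y Xᴴ (X Xᴴ)⁻¹ = (Y Xᵀ)(X Xᵀ)⁻¹ = G H⁻¹`
with `G = (1/M) Y Xᵀ` and `H = (1/M) X Xᵀ`, assuming `X Xᴴ` and `X Xᵀ`
are invertible. -/
theorem edmd_conj_symmetry {N M : ℕ} (hM : 0 < M)
    (X Y : Matrix (Fin N) (Fin M) ℂ)
    (hconj : ∀ i : Fin N, ∃ j : Fin N,
      (∀ m, X j m = (starRingEnd ℂ) (X i m)) ∧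
      (∀ m, Y j m = (starRingEnd ℂ) (Y i m)))
    (hH : IsUnit (X * X.conjTranspose))
    (hT : IsUnit (X * X.transpose))
    (G H : Matrix (Fin N) (Fin N) ℂ)
    (hG : G = ((M : ℂ)⁻¹) • (Y * X.transpose))
    (hHdef : H = ((M : ℂ)⁻¹) • (X * X.transpose)) :
    Y * X.conjTranspose * (X * X.conjTranspose)⁻¹
        = Y * X.transpose * (X * X.transpose)⁻¹ ∧
    Y * X.transpose * (X * X.transpose)⁻¹ = G * H⁻¹ := by
  have hdH : IsUnit (X * X.conjTranspose).det :=
    (Matrix.isUnit_iff_isUnit_det _).mp hH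
  have hdT : IsUnit (X * X.transpose).det :=
    (Matrix.isUnit_iff_isUnit_det _).mp hT
  set A := Y * X.conjTranspose * (X * X.conjTranspose)⁻¹ with hA
  have h1 : A * X * X.conjTranspose = Y * X.conjTranspose := by
    rw [Matrix.mul_assoc, hA, Matrix.nonsing_inv_mul_cancel_right _ _ hdH]
  have h2 : A * X * X.transpose = Y * X.transpose := by
    ext i j
    obtain ⟨j', hX, hY⟩ := hconj j
    have e1 : (A * X * X.transpose) i j = (A * X * X.conjTranspose) i j' := by
      simp only [Matrix.mul_apply, Matrix.transpose_apply, Matrix.conjTranspose_apply]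
      refine Finset.sum_congr rfl fun m _ => ?_
      rw [hX m]
      simp
    have e2 : (Y * X.transpose) i j = (Y * X.conjTranspose) i j' := by
      simp only [Matrix.mul_apply, Matrix.transpose_apply, Matrix.conjTranspose_apply]
      refine Finset.sum_congr rfl fun m _ => ?_
      rw [hX m]
      simp
    rw [e1, h1, e2]
  have hAeq : A = Y * X.transpose * (X * X.transpose)⁻¹ := by
    calc A = A * (X * X.transpose) * (X * X.transpose)⁻¹ := by
            rw [Matrix.mul_nonsing_inv_cancel_right _ _ hdT]
      _ = Y * X.transpose * (X * X.transpose)⁻¹ := by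
            rw [← Matrix.mul_assoc, h2]
  refine ⟨hAeq, ?_⟩
  have hM0 : (M : ℂ) ≠ 0 := Nat.cast_ne_zero.mpr hM.ne'
  have : Invertible ((M : ℂ)⁻¹) := invertibleOfNonzero (inv_ne_zero hM0)
  rw [hG, hHdef, Matrix.inv_smul _ ((M:ℂ)⁻¹) hdT, Matrix.smul_mul, Matrix.mul_smul,
    smul_smul]
  rw [mul_invOf_self, one_smul]
end

section
/- Let τ(z) = z² on the unit circle with Perron-Frobenius operator ℒ defined as follows: for f(z) = Σ_{n∈ℤ} a_n z^n holomorphic on an annulus, ℒf is the function with Laurent coefficients (ℒf)ˆ(n) = a_{2n}. Then ℒ maps the Hardy space H²(𝔸_ρ) of the annulus {ρ < |z| < 1/ρ} (0 < ρ < 1) boundedly into H²(𝔸_{ρ'}) with ρ' = ρ², and ℒ : H²(𝔸_ρ) → H²(𝔸_ρ) is compact with nonzero spectrum {1}, the eigenvalue 1 being simple with eigenfunction the constant function 1. -/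
open Complex ENNReal NNReal

/-- Weight sequence of the Hardy-Hilbert space `H²(𝔸_ρ)` of the annulus
`{ρ < |z| < 1/ρ}`: `w ρ n = ρ^{2n} + ρ^{-2n}`. -/
noncomputable def hardyWeight (ρ : ℝ) (n : ℤ) : ℝ := ρ ^ (2 * n) + ρ ^ (-(2 * n))

namespace DPF

noncomputable abbrev H2 := lp (fun _ : ℤ => ℂ) 2

/-! ### Generic weighted composition operators on `ℓ²(ℤ)` -/

lemma summable_sq (a : H2) : Summable (fun n : ℤ => ‖a n‖ ^ ((2:ℝ≥0∞).toReal)) :=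
  (lp.memℓp a).summable (by norm_num)

lemma toReal_two : ((2:ℝ≥0∞).toReal) = ((2:ℕ):ℝ) := by norm_num

lemma norm_sq_bound (γ : ℤ → ℝ) (σ : ℤ → ℤ) {M : ℝ} (hM : ∀ n, |γ n| ≤ M) (a : H2) (n : ℤ) :
    ‖(γ n : ℂ) * a (σ n)‖ ^ ((2:ℝ≥0∞).toReal) ≤ M^2 * ‖a (σ n)‖ ^ ((2:ℝ≥0∞).toReal) := by
  have hγ : ‖(γ n : ℂ) * a (σ n)‖ = |γ n| * ‖a (σ n)‖ := by
    rw [norm_mul, Complex.norm_real, Real.norm_eq_abs]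
  rw [hγ, toReal_two, Real.rpow_natCast, Real.rpow_natCast, mul_pow]
  exact mul_le_mul_of_nonneg_right
    (pow_le_pow_left₀ (abs_nonneg _) (hM n) 2) (pow_nonneg (norm_nonneg _) 2)

lemma memWC (γ : ℤ → ℝ) (σ : ℤ → ℤ) (hσ : Function.Injective σ) {M : ℝ}
    (hM : ∀ n, |γ n| ≤ M) (a : H2) :
    Memℓp (fun n => (γ n : ℂ) * a (σ n)) 2 := by
  apply memℓp_gen
  have h1 : Summable (fun n : ℤ => ‖a (σ n)‖ ^ ((2:ℝ≥0∞).toReal)) :=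
    (summable_sq a).comp_injective hσ
  exact Summable.of_nonneg_of_le (fun n => by positivity)
    (norm_sq_bound γ σ hM a) (h1.mul_left (M^2))

/-- key norm estimate : any `f` given pointwise by a bounded weight times an injective
reindexing of `a` has norm at most `M * ‖a‖`. -/
lemma norm_le_of_eq (γ : ℤ → ℝ) (σ : ℤ → ℤ) (hσ : Function.Injective σ) {M : ℝ}
    (hM : ∀ n, |γ n| ≤ M) (a f : H2) (hf : ∀ n, f n = (γ n : ℂ) * a (σ n)) :
    ‖f‖ ≤ M * ‖a‖ := by
  have hM0 : 0 ≤ M := le_trans (abs_nonneg _) (hM 0)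
  have hp : 0 < ((2:ℝ≥0∞)).toReal := by norm_num
  have h1 : Summable (fun n : ℤ => ‖a (σ n)‖ ^ ((2:ℝ≥0∞).toReal)) :=
    (summable_sq a).comp_injective hσ
  have key : ‖f‖ ^ ((2:ℝ≥0∞)).toReal ≤ (M * ‖a‖) ^ ((2:ℝ≥0∞)).toReal := by
    rw [lp.norm_rpow_eq_tsum hp]
    calc ∑' n, ‖f n‖ ^ ((2:ℝ≥0∞)).toReal
        ≤ ∑' n, M^2 * ‖a (σ n)‖ ^ ((2:ℝ≥0∞)).toReal := by
          refine Summable.tsum_le_tsum (fun n => by rw [hf n]; exact norm_sq_bound γ σ hM a n) ?_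
            (h1.mul_left _)
          refine Summable.of_nonneg_of_le (fun n => by positivity)
            (fun n => by rw [hf n]; exact norm_sq_bound γ σ hM a n) (h1.mul_left (M^2))
      _ = M^2 * ∑' n, ‖a (σ n)‖ ^ ((2:ℝ≥0∞).toReal) := tsum_mul_left
      _ ≤ M^2 * ∑' m, ‖a m‖ ^ ((2:ℝ≥0∞).toReal) := by
          refine mul_le_mul_of_nonneg_left ?_ (by positivity)
          exact Summable.tsum_le_tsum_of_inj σ hσ (fun m _ => by positivity)
            (fun n => le_rfl) h1 (summable_sq a)
      _ = (M * ‖a‖) ^ ((2:ℝ≥0∞)).toReal := by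
          rw [← lp.norm_rpow_eq_tsum hp, toReal_two, Real.rpow_natCast, Real.rpow_natCast,
            mul_pow]
  rw [toReal_two, Real.rpow_natCast, Real.rpow_natCast] at key
  nlinarith [norm_nonneg f, norm_nonneg a, mul_nonneg hM0 (norm_nonneg a)]

/-- the weighted composition operator as a linear map -/
noncomputable def wcLin (γ : ℤ → ℝ) (σ : ℤ → ℤ) (hσ : Function.Injective σ) {M : ℝ}
    (hM : ∀ n, |γ n| ≤ M) : H2 →ₗ[ℂ] H2 where
  toFun a := ⟨fun n => (γ n : ℂ) * a (σ n), memWC γ σ hσ hM a⟩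
  map_add' a b := by
    apply lp.ext
    funext n
    simp only [lp.coeFn_add, Pi.add_apply]
    change (γ n : ℂ) * (a + b : H2) (σ n) = _
    rw [lp.coeFn_add]
    simp only [Pi.add_apply]
    ring
  map_smul' c a := by
    apply lp.ext
    funext n
    simp only [lp.coeFn_smul, Pi.smul_apply, RingHom.id_apply]
    change (γ n : ℂ) * (c • a : H2) (σ n) = _
    rw [lp.coeFn_smul]
    simp only [Pi.smul_apply, smul_eq_mul]
    ring

/-- the weighted composition operator -/
noncomputable def wcOp (γ : ℤ → ℝ) (σ : ℤ → ℤ) (hσ : Function.Injective σ) {M : ℝ}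
    (hM : ∀ n, |γ n| ≤ M) : H2 →L[ℂ] H2 :=
  LinearMap.mkContinuous (wcLin γ σ hσ hM) M
    (fun a => norm_le_of_eq γ σ hσ hM a _ (fun _ => rfl))

@[simp] lemma wcOp_apply (γ : ℤ → ℝ) (σ : ℤ → ℤ) (hσ : Function.Injective σ) {M : ℝ}
    (hM : ∀ n, |γ n| ≤ M) (a : H2) (n : ℤ) :
    (wcOp γ σ hσ hM a) n = (γ n : ℂ) * a (σ n) := rfl


/-! ### The coefficients -/

section Coef
variable {ρ : ℝ} (hρ0 : 0 < ρ) (hρ1 : ρ < 1)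

/-- the eigen-coefficients -/
noncomputable def coef (ρ : ℝ) (n : ℤ) : ℝ :=
  Real.sqrt (hardyWeight ρ n) / Real.sqrt (hardyWeight ρ (2*n))

include hρ0

lemma hw_pos (n : ℤ) : 0 < hardyWeight ρ n := by
  have := zpow_pos hρ0 (2*n)
  have := zpow_pos hρ0 (-(2*n))
  unfold hardyWeight; linarith

lemma sqrt_zpow (k : ℤ) : Real.sqrt (ρ ^ (2*k)) = ρ ^ k := by
  have h : ρ ^ (2*k) = (ρ^k)^2 := by
    rw [← zpow_natCast (ρ^k) 2, ← zpow_mul]; ring_nf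
  rw [h, Real.sqrt_sq (zpow_pos hρ0 k).le]

omit hρ0 in
lemma hw_sq (n : ℤ) : hardyWeight (ρ^2) n = hardyWeight ρ (2*n) := by
  unfold hardyWeight
  rw [show (ρ^2) = ρ^((2:ℕ):ℤ) by rw [zpow_natCast]]
  rw [← zpow_mul, ← zpow_mul]
  norm_num

lemma coef_nonneg (n : ℤ) : 0 ≤ coef ρ n :=
  div_nonneg (Real.sqrt_nonneg _) (Real.sqrt_nonneg _)

lemma coef_zero : coef ρ 0 = 1 := by
  unfold coef
  rw [show (2*(0:ℤ)) = 0 by ring, div_self (ne_of_gt (Real.sqrt_pos.2 (hw_pos hρ0 0)))]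

include hρ1

lemma hw_le (n : ℤ) : hardyWeight ρ n ≤ 2 * ρ ^ (-(2 * (|n| : ℤ))) := by
  unfold hardyWeight
  have h1 : ρ ^ (2*n) ≤ ρ ^ (-(2 * |n|)) := by
    apply zpow_le_zpow_right_of_le_one₀ hρ0 hρ1.le
    have := neg_abs_le n; nlinarith [abs_nonneg n]
  have h2 : ρ ^ (-(2*n)) ≤ ρ ^ (-(2 * |n|)) := by
    apply zpow_le_zpow_right_of_le_one₀ hρ0 hρ1.le
    have := le_abs_self n; nlinarith
  linarith

omit hρ1 in
lemma hw_ge (n : ℤ) : ρ ^ (-(4 * (|n| : ℤ))) ≤ hardyWeight ρ (2*n) := by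
  unfold hardyWeight
  have h1 := zpow_pos hρ0 (2*(2*n))
  have h2 := zpow_pos hρ0 (-(2*(2*n)))
  rcases le_or_gt 0 n with h | h
  · have e : -(4 * |n|) = -(2*(2*n)) := by rw [abs_of_nonneg h]; ring
    rw [e]; linarith
  · have e : -(4 * |n|) = 2*(2*n) := by rw [abs_of_neg h]; ring
    rw [e]; linarith

lemma coef_le (n : ℤ) : coef ρ n ≤ Real.sqrt 2 * ρ ^ (n.natAbs) := by
  have hA : Real.sqrt (hardyWeight ρ n) ≤ Real.sqrt 2 * ρ ^ (-(|n|:ℤ)) := by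
    calc Real.sqrt (hardyWeight ρ n) ≤ Real.sqrt (2 * ρ ^ (-(2 * (|n| : ℤ)))) :=
          Real.sqrt_le_sqrt (hw_le hρ0 hρ1 n)
      _ = Real.sqrt 2 * ρ ^ (-(|n|:ℤ)) := by
          rw [Real.sqrt_mul (by norm_num), show (-(2 * (|n| : ℤ))) = 2 * (-(|n|:ℤ)) by ring,
            sqrt_zpow hρ0]
  have hB : ρ ^ (-(2*(|n|:ℤ))) ≤ Real.sqrt (hardyWeight ρ (2*n)) := by
    have e : ρ ^ (-(2*(|n|:ℤ))) = Real.sqrt (ρ ^ (-(4 * (|n| : ℤ)))) := by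
      rw [show (-(4 * (|n| : ℤ))) = 2 * (-(2*(|n|:ℤ))) by ring, sqrt_zpow hρ0]
    rw [e]
    exact Real.sqrt_le_sqrt (hw_ge hρ0 n)
  have hBpos : 0 < ρ ^ (-(2*(|n|:ℤ))) := zpow_pos hρ0 _
  have key : coef ρ n ≤ (Real.sqrt 2 * ρ ^ (-(|n|:ℤ))) / (ρ ^ (-(2*(|n|:ℤ)))) :=
    div_le_div₀ (by positivity) hA hBpos hB
  refine key.trans_eq ?_
  rw [mul_div_assoc]
  congr 1
  rw [← zpow_sub₀ (ne_of_gt hρ0),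
    show (-(|n|:ℤ) - -(2*(|n|:ℤ))) = (|n|:ℤ) by ring,
    ← zpow_natCast ρ n.natAbs, Int.abs_eq_natAbs]

lemma coef_le_sqrt_two (n : ℤ) : coef ρ n ≤ Real.sqrt 2 := by
  refine (coef_le hρ0 hρ1 n).trans ?_
  have h : ρ ^ (n.natAbs) ≤ 1 := pow_le_one₀ hρ0.le hρ1.le
  nlinarith [Real.sqrt_nonneg 2]

lemma abs_coef_le (n : ℤ) : |coef ρ n| ≤ Real.sqrt 2 := by
  rw [_root_.abs_of_nonneg (coef_nonneg hρ0 n)]; exact coef_le_sqrt_two hρ0 hρ1 n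

lemma abs_coef_le' (n : ℤ) : |coef ρ n| ≤ Real.sqrt 2 * ρ ^ (n.natAbs) := by
  rw [_root_.abs_of_nonneg (coef_nonneg hρ0 n)]; exact coef_le hρ0 hρ1 n

end Coef


/-! ### The operators -/

section Op
variable {ρ : ℝ} (hρ0 : 0 < ρ) (hρ1 : ρ < 1)

lemma σ2_inj : Function.Injective (fun n : ℤ => 2 * n) := fun a b h => by
  have h' : 2 * a = 2 * b := h
  omega

/-- coefficient of the rank-one part -/
noncomputable def cP : ℤ → ℝ := fun n => if n = 0 then 1 else 0

/-- coefficient of the quasinilpotent part -/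
noncomputable def cD (ρ : ℝ) : ℤ → ℝ := fun n => if n = 0 then 0 else coef ρ n

lemma abs_cP_le (n : ℤ) : |cP n| ≤ 1 := by
  unfold cP; split <;> simp

include hρ0 hρ1 in
lemma abs_cD_le (n : ℤ) : |cD ρ n| ≤ Real.sqrt 2 := by
  unfold cD; split
  · simp [Real.sqrt_nonneg]
  · exact abs_coef_le hρ0 hρ1 n

include hρ0 hρ1 in
lemma abs_cD_le' (n : ℤ) : |cD ρ n| ≤ Real.sqrt 2 * ρ ^ (n.natAbs) := by
  unfold cD; split
  · simp; positivity
  · exact abs_coef_le' hρ0 hρ1 n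

/-- the Perron-Frobenius operator -/
noncomputable def opL : H2 →L[ℂ] H2 :=
  wcOp (coef ρ) (fun n => 2 * n) σ2_inj (abs_coef_le hρ0 hρ1)

/-- the rank-one projection onto the constants -/
noncomputable def opP : H2 →L[ℂ] H2 :=
  wcOp cP (fun n => 2 * n) σ2_inj abs_cP_le

/-- the quasinilpotent part -/
noncomputable def opD : H2 →L[ℂ] H2 :=
  wcOp (cD ρ) (fun n => 2 * n) σ2_inj (abs_cD_le hρ0 hρ1)

lemma opL_apply (a : H2) (n : ℤ) : (opL hρ0 hρ1 a) n = (coef ρ n : ℂ) * a (2 * n) := rfl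
lemma opP_apply (a : H2) (n : ℤ) : (opP a) n = (cP n : ℂ) * a (2 * n) := rfl
lemma opD_apply (a : H2) (n : ℤ) : (opD hρ0 hρ1 a) n = (cD ρ n : ℂ) * a (2 * n) := rfl

lemma opL_eq_add : opL hρ0 hρ1 = opP + opD hρ0 hρ1 := by
  refine ContinuousLinearMap.ext fun a => lp.ext (funext fun n => ?_)
  have h1 : ((opP + opD hρ0 hρ1) a : ∀ _ : ℤ, ℂ) n = (opP a) n + (opD hρ0 hρ1 a) n := by
    rw [ContinuousLinearMap.add_apply, lp.coeFn_add]; rfl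
  rw [h1, opL_apply, opP_apply, opD_apply]
  by_cases hn : n = 0
  · subst hn; rw [coef_zero hρ0]; simp [cP, cD]
  · simp [cP, cD, hn]

lemma opP_mul_opP : opP * opP = (opP : H2 →L[ℂ] H2) := by
  refine ContinuousLinearMap.ext fun a => lp.ext (funext fun n => ?_)
  have h1 : ((opP * opP) a : ∀ _ : ℤ, ℂ) n = (cP n : ℂ) * ((opP a) (2 * n)) := rfl
  rw [h1, opP_apply, opP_apply]
  by_cases hn : n = 0
  · subst hn
    norm_num [cP]
    congr 1
  · simp [cP, hn]

lemma opP_mul_opD : opP * opD hρ0 hρ1 = 0 := by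
  refine ContinuousLinearMap.ext fun a => lp.ext (funext fun n => ?_)
  have h1 : ((opP * opD hρ0 hρ1) a : ∀ _ : ℤ, ℂ) n
      = (cP n : ℂ) * ((opD hρ0 hρ1 a) (2 * n)) := rfl
  have h0 : ((0 : H2 →L[ℂ] H2) a : ∀ _ : ℤ, ℂ) n = 0 := by
    rw [ContinuousLinearMap.zero_apply, lp.coeFn_zero]; rfl
  rw [h1, h0, opD_apply]
  by_cases hn : n = 0
  · subst hn; norm_num [cD]
  · simp [cP, hn]

lemma opD_mul_opP : opD hρ0 hρ1 * opP = 0 := by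
  refine ContinuousLinearMap.ext fun a => lp.ext (funext fun n => ?_)
  have h1 : ((opD hρ0 hρ1 * opP) a : ∀ _ : ℤ, ℂ) n
      = (cD ρ n : ℂ) * ((opP a) (2 * n)) := rfl
  have h0 : ((0 : H2 →L[ℂ] H2) a : ∀ _ : ℤ, ℂ) n = 0 := by
    rw [ContinuousLinearMap.zero_apply, lp.coeFn_zero]; rfl
  rw [h1, h0, opP_apply]
  by_cases hn : n = 0
  · subst hn; norm_num [cD]
  · have h2n : ¬ (2 * n = 0) := by omega
    simp [cP, h2n]

end Op


/-! ### Powers of `D` and quasinilpotency -/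

section Pow
variable {ρ : ℝ} (hρ0 : 0 < ρ) (hρ1 : ρ < 1)

/-- coefficients of the powers of `D` -/
noncomputable def Ck (ρ : ℝ) : ℕ → ℤ → ℝ
  | 0, _ => 1
  | (k+1), n => Ck ρ k n * cD ρ ((2^k : ℤ) * n)

lemma pow2_inj (k : ℕ) : Function.Injective (fun n : ℤ => (2^k : ℤ) * n) := by
  intro a b h
  have h' : (2^k : ℤ) * a = (2^k : ℤ) * b := h
  exact mul_left_cancel₀ (by positivity) h'

lemma opD_pow_apply (k : ℕ) (a : H2) (n : ℤ) :
    ((opD hρ0 hρ1 ^ k) a) n = (Ck ρ k n : ℂ) * a ((2^k : ℤ) * n) := by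
  induction k generalizing a with
  | zero => simp [Ck]
  | succ k ih =>
    rw [pow_succ]
    have h1 : ((opD hρ0 hρ1 ^ k * opD hρ0 hρ1) a) n
        = ((opD hρ0 hρ1 ^ k) (opD hρ0 hρ1 a)) n := rfl
    rw [h1, ih, opD_apply]
    have h2 : (2 : ℤ) * ((2^k : ℤ) * n) = (2^(k+1) : ℤ) * n := by ring
    rw [h2]
    show (Ck ρ k n : ℂ) * ((cD ρ ((2^k:ℤ) * n) : ℂ) * a ((2^(k+1):ℤ) * n)) = _
    rw [show Ck ρ (k+1) n = Ck ρ k n * cD ρ ((2^k : ℤ) * n) from rfl]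
    push_cast
    ring

include hρ0 hρ1 in
lemma Ck_bound (k : ℕ) (n : ℤ) :
    |Ck ρ k n| ≤ (Real.sqrt 2)^k * ρ ^ ((2^k - 1) * n.natAbs) := by
  induction k with
  | zero => simp [Ck]
  | succ k ih =>
    have h1 : |Ck ρ (k+1) n| = |Ck ρ k n| * |cD ρ ((2^k : ℤ) * n)| := by
      rw [show Ck ρ (k+1) n = Ck ρ k n * cD ρ ((2^k : ℤ) * n) from rfl, abs_mul]
    rw [h1]
    have h2 : |cD ρ ((2^k : ℤ) * n)| ≤ Real.sqrt 2 * ρ ^ (2^k * n.natAbs) := by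
      have := abs_cD_le' hρ0 hρ1 ((2^k : ℤ) * n)
      rwa [Int.natAbs_mul, Int.natAbs_pow] at this
    calc |Ck ρ k n| * |cD ρ ((2^k : ℤ) * n)|
        ≤ ((Real.sqrt 2)^k * ρ ^ ((2^k - 1) * n.natAbs)) * (Real.sqrt 2 * ρ ^ (2^k * n.natAbs)) :=
          mul_le_mul ih h2 (abs_nonneg _) (by positivity)
      _ = (Real.sqrt 2)^(k+1) * ρ ^ ((2^(k+1) - 1) * n.natAbs) := by
          have hexp : (2^k - 1) * n.natAbs + 2^k * n.natAbs = (2^(k+1) - 1) * n.natAbs := by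
            have h : 1 ≤ (2:ℕ)^k := Nat.one_le_two_pow
            have h2 : (2:ℕ)^(k+1) = 2^k + 2^k := by rw [pow_succ]; ring
            cases' Nat.exists_eq_add_of_le h with c hc
            have e1 : 1 + c - 1 = c := by omega
            have e2 : (1+c)+(1+c)-1 = 1+2*c := by omega
            rw [h2, hc, e1, e2]; ring
          rw [pow_succ, ← hexp, pow_add]; ring

lemma Ck_succ_zero (k : ℕ) : Ck ρ (k+1) 0 = 0 := by
  rw [show Ck ρ (k+1) 0 = Ck ρ k 0 * cD ρ ((2^k : ℤ) * 0) from rfl]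
  simp [cD]

include hρ0 hρ1 in
lemma Ck_abs_le (k : ℕ) (n : ℤ) :
    |Ck ρ (k+1) n| ≤ (Real.sqrt 2)^(k+1) * ρ ^ (2^(k+1) - 1) := by
  by_cases hn : n = 0
  · subst hn; rw [Ck_succ_zero]; simp; positivity
  · refine (Ck_bound hρ0 hρ1 (k+1) n).trans ?_
    have h1 : 1 ≤ n.natAbs := by omega
    have h2 : ρ ^ ((2^(k+1) - 1) * n.natAbs) ≤ ρ ^ (2^(k+1) - 1) :=
      pow_le_pow_of_le_one hρ0.le hρ1.le (Nat.le_mul_of_pos_right _ (by omega))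
    exact mul_le_mul_of_nonneg_left h2 (by positivity)

include hρ0 hρ1 in
lemma opD_pow_norm (k : ℕ) :
    ‖opD hρ0 hρ1 ^ (k+1)‖ ≤ (Real.sqrt 2)^(k+1) * ρ ^ (2^(k+1) - 1) := by
  refine ContinuousLinearMap.opNorm_le_bound _ (by positivity) (fun a => ?_)
  exact norm_le_of_eq (Ck ρ (k+1)) (fun n => (2^(k+1) : ℤ) * n) (pow2_inj (k+1))
    (Ck_abs_le hρ0 hρ1 k) a _ (fun n => opD_pow_apply hρ0 hρ1 (k+1) a n)

/-! ### decay -/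

lemma two_mul_le_two_pow (m : ℕ) : 2 * m ≤ 2^m := by
  cases m with
  | zero => norm_num
  | succ k =>
    have h : k + 1 ≤ 2^k := Nat.lt_two_pow_self (n := k)
    calc 2 * (k+1) ≤ 2 * 2^k := by omega
      _ = 2^(k+1) := (pow_succ 2 k).symm ▸ by ring

lemma nat_key (m : ℕ) : m * 2^m + 1 ≤ 2^(2^m) := by
  have h1 : m < 2^m := Nat.lt_two_pow_self (n := m)
  have h2 : m * 2^m < 2^m * 2^m := by
    have := Nat.pow_pos (n := m) (show 0 < 2 by norm_num)
    exact Nat.mul_lt_mul_of_lt_of_le h1 le_rfl (by positivity)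
  have h3 : (2:ℕ)^m * 2^m = 2^(2*m) := by rw [← pow_add]; ring_nf
  have h4 : (2:ℕ)^(2*m) ≤ 2^(2^m) := Nat.pow_le_pow_right (by norm_num) (two_mul_le_two_pow m)
  omega

include hρ0 hρ1 in
lemma decay (ε : ℝ) (hε : 0 < ε) :
    ∃ k : ℕ, (Real.sqrt 2)^(k+1) * ρ ^ (2^(k+1) - 1) ≤ ε^(k+1) := by
  have hs2 : (0:ℝ) < Real.sqrt 2 := by positivity
  obtain ⟨m, hm⟩ := exists_pow_lt_of_lt_one (div_pos hε hs2) hρ1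
  have hx : Real.sqrt 2 * ρ^m ≤ ε := by
    have := (mul_lt_mul_of_pos_left hm hs2)
    rw [mul_div_cancel₀ _ (ne_of_gt hs2)] at this
    linarith
  set N := 2^m with hN
  have hN1 : 1 ≤ N := Nat.one_le_two_pow
  refine ⟨N - 1, ?_⟩
  have hNk : N - 1 + 1 = N := by omega
  rw [hNk]
  have hkey : m * N + 1 ≤ 2^N := by simpa [hN] using nat_key m
  have hexp : m * N ≤ 2^N - 1 := by omega
  have h1 : ρ ^ (2^N - 1) ≤ ρ ^ (m * N) :=
    pow_le_pow_of_le_one hρ0.le hρ1.le hexp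
  calc (Real.sqrt 2)^N * ρ ^ (2^N - 1) ≤ (Real.sqrt 2)^N * ρ ^ (m * N) :=
        mul_le_mul_of_nonneg_left h1 (by positivity)
    _ = (Real.sqrt 2 * ρ^m)^N := by rw [mul_pow, ← pow_mul]
    _ ≤ ε^N := pow_le_pow_left₀ (by positivity) hx N

include hρ0 hρ1 in
lemma srD_eq_zero : spectralRadius ℂ (opD hρ0 hρ1) = 0 := by
  by_contra h
  have hpos : 0 < spectralRadius ℂ (opD hρ0 hρ1) := pos_iff_ne_zero.mpr h
  obtain ⟨ε, hε0, hεlt⟩ := ENNReal.lt_iff_exists_nnreal_btwn.1 hpos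
  have hε0' : (0:ℝ) < (ε:ℝ) := by exact_mod_cast hε0
  obtain ⟨k, hk⟩ := decay hρ0 hρ1 (ε:ℝ) hε0'
  have hle := spectrum.spectralRadius_le_pow_nnnorm_pow_one_div ℂ (opD hρ0 hρ1) k
  have hb : ‖opD hρ0 hρ1 ^ (k+1)‖₊ ≤ ε^(k+1) := by
    rw [← NNReal.coe_le_coe]
    push_cast
    exact (opD_pow_norm hρ0 hρ1 k).trans hk
  have h2 : ((‖opD hρ0 hρ1 ^ (k+1)‖₊ : ℝ≥0∞)) ^ (1/(k+1) : ℝ) ≤ (ε : ℝ≥0∞) := by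
    have hmono : ((‖opD hρ0 hρ1 ^ (k+1)‖₊ : ℝ≥0∞)) ^ (1/(k+1) : ℝ)
        ≤ ((ε^(k+1) : ℝ≥0) : ℝ≥0∞) ^ (1/(k+1) : ℝ) := by
      apply ENNReal.rpow_le_rpow _ (by positivity)
      exact_mod_cast hb
    refine hmono.trans_eq ?_
    rw [ENNReal.coe_pow, ← ENNReal.rpow_natCast ((ε:ℝ≥0∞)) (k+1), ← ENNReal.rpow_mul]
    rw [show ((k+1:ℕ):ℝ) * (1/(k+1) : ℝ) = 1 by push_cast; field_simp, ENNReal.rpow_one]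
  have h3 : ((‖(1 : H2 →L[ℂ] H2)‖₊ : ℝ≥0∞)) ^ (1/(k+1) : ℝ) ≤ 1 := by
    apply ENNReal.rpow_le_one _ (by positivity)
    have : ‖(1 : H2 →L[ℂ] H2)‖ ≤ 1 := ContinuousLinearMap.norm_id_le
    exact_mod_cast this
  have h4 : spectralRadius ℂ (opD hρ0 hρ1) ≤ (ε : ℝ≥0∞) := by
    refine hle.trans ?_
    calc _ ≤ (ε : ℝ≥0∞) * 1 := mul_le_mul' h2 h3
      _ = (ε : ℝ≥0∞) := mul_one _
  exact absurd h4 (not_le.2 hεlt)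

end Pow


/-! ### Spectrum -/

section Spec
variable {ρ : ℝ} (hρ0 : 0 < ρ) (hρ1 : ρ < 1)

set_option maxHeartbeats 1000000 in
include hρ0 hρ1 in
lemma isUnit_algebraMap_sub (lam : ℂ) (h0 : lam ≠ 0) (h1 : lam ≠ 1) :
    IsUnit (algebraMap ℂ (H2 →L[ℂ] H2) lam - opL hρ0 hρ1) := by
  classical
  set c : H2 →L[ℂ] H2 := algebraMap ℂ (H2 →L[ℂ] H2) lam with hc
  set P : H2 →L[ℂ] H2 := opP with hP
  set D : H2 →L[ℂ] H2 := opD hρ0 hρ1 with hD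
  have hres : lam ∈ resolventSet ℂ D :=
    spectrum.mem_resolventSet_of_spectralRadius_lt
      (by rw [hD, srD_eq_zero hρ0 hρ1]; exact ENNReal.coe_pos.2 (nnnorm_pos.2 h0))
  obtain ⟨u, hu⟩ := (hres : IsUnit (c - D))
  set S : H2 →L[ℂ] H2 := (↑u⁻¹ : H2 →L[ℂ] H2) with hS
  have hS1 : (c - D) * S = 1 := by rw [← hu]; exact u.mul_inv
  have hS2 : S * (c - D) = 1 := by rw [← hu]; exact u.inv_mul
  have hPP : P * P = P := opP_mul_opP
  have hPD : P * D = 0 := opP_mul_opD hρ0 hρ1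
  have hDP : D * P = 0 := opD_mul_opP hρ0 hρ1
  have hcomm : Commute P (c - D) := by
    show P * (c - D) = (c - D) * P
    rw [mul_sub, sub_mul, hPD, hDP, sub_zero, sub_zero, hc, ← Algebra.commutes]
  have hPS : P * S = S * P := by
    have h := hcomm
    rw [← hu] at h
    exact h.units_inv_right
  have hcP : (c - D) * P = lam • P := by
    rw [sub_mul, hDP, sub_zero, hc, Algebra.algebraMap_eq_smul_one, smul_mul_assoc, one_mul]
  have hPc : P * (c - D) = lam • P := by rw [hcomm]; exact hcP
  set t : ℂ := (lam - 1)⁻¹ with ht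
  have htt : t * (lam - 1) = 1 := inv_mul_cancel₀ (sub_ne_zero.2 h1)
  set R : H2 →L[ℂ] H2 := S * (1 - P) + t • P with hR
  have hsub : lam • P - P = (lam - 1) • P := by rw [sub_smul, one_smul]
  -- M * R = 1
  have e1 : (c - D) * (S * (1 - P)) = 1 - P := by rw [← mul_assoc, hS1, one_mul]
  have ePzero : P * (1 - P) = 0 := by rw [mul_sub, mul_one, hPP, sub_self]
  have e2 : P * (S * (1 - P)) = 0 := by rw [← mul_assoc, hPS, mul_assoc, ePzero, mul_zero]
  have e3 : ((c - D) - P) * (t • P) = P := by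
    rw [sub_mul, mul_smul_comm, mul_smul_comm, ← smul_sub, hcP, hPP, hsub, smul_smul, htt,
      one_smul]
  have hMR : ((c - D) - P) * R = 1 := by
    rw [hR, mul_add, sub_mul, e1, e2, sub_zero, e3, sub_add_cancel]
  -- R * M = 1
  have f10 : lam • (S * P) = P := by
    calc lam • (S * P) = S * (lam • P) := (mul_smul_comm _ _ _).symm
      _ = S * ((c - D) * P) := by rw [hcP]
      _ = (S * (c - D)) * P := (mul_assoc _ _ _).symm
      _ = P := by rw [hS2, one_mul]
  have g1 : (S * (1 - P)) * ((c - D) - P) = 1 - lam • (S * P) := by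
    have h1sub : (1 - P) * ((c - D) - P) = (c - D) - lam • P := by
      rw [sub_mul, one_mul, mul_sub, hPc, hPP, sub_sub_sub_cancel_right]
    rw [mul_assoc, h1sub, mul_sub, hS2, mul_smul_comm]
  have g2 : (t • P) * ((c - D) - P) = P := by
    rw [smul_mul_assoc, mul_sub, hPc, hPP, hsub, smul_smul, htt, one_smul]
  have hRM : R * ((c - D) - P) = 1 := by
    rw [hR, add_mul, g1, g2, f10, sub_add_cancel]
  have hM : c - opL hρ0 hρ1 = (c - D) - P := by
    rw [opL_eq_add hρ0 hρ1, ← hP, ← hD]; abel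
  rw [hM]
  exact ⟨⟨(c - D) - P, R, hMR, hRM⟩, rfl⟩

/-- the eigenvector -/
noncomputable def vec (ρ : ℝ) : H2 :=
  ((Real.sqrt (hardyWeight ρ 0) : ℂ)) • lp.single 2 0 1

lemma vec_apply (n : ℤ) :
    (vec ρ : ∀ _ : ℤ, ℂ) n
      = if n = 0 then ((Real.sqrt (hardyWeight ρ 0) : ℂ)) else 0 := by
  rw [vec, lp.coeFn_smul, Pi.smul_apply, smul_eq_mul]
  by_cases hn : n = 0
  · subst hn; rw [if_pos rfl, lp.single_apply_self, mul_one]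
  · rw [if_neg hn, lp.single_apply_ne 2 0 _ hn, mul_zero]

include hρ0 in
lemma vec_ne_zero : vec ρ ≠ 0 := by
  intro h
  have h0 : (vec ρ : ∀ _ : ℤ, ℂ) 0 = 0 := by rw [h, lp.coeFn_zero]; rfl
  rw [vec_apply, if_pos rfl] at h0
  have := Real.sqrt_pos.2 (hw_pos hρ0 0)
  exact (Complex.ofReal_ne_zero.mpr (ne_of_gt this)) h0

include hρ1 in
lemma opL_fixes_vec : opL hρ0 hρ1 (vec ρ) = vec ρ := by
  apply lp.ext
  funext n
  rw [opL_apply hρ0 hρ1]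
  by_cases hn : n = 0
  · subst hn
    rw [coef_zero hρ0, vec_apply, vec_apply, show (2 * (0:ℤ)) = 0 by ring]
    simp
  · have h2n : ¬ ((2*n : ℤ) = 0) := by omega
    rw [vec_apply, vec_apply, if_neg hn, if_neg h2n, mul_zero]

include hρ0 hρ1 in
lemma one_mem_spectrum : (1:ℂ) ∈ spectrum ℂ (opL hρ0 hρ1) := by
  rw [spectrum.mem_iff]
  intro hunit
  obtain ⟨u, hu⟩ := hunit
  have h1 : (algebraMap ℂ (H2 →L[ℂ] H2) 1 - opL hρ0 hρ1) (vec ρ) = 0 := by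
    rw [map_one, ContinuousLinearMap.sub_apply, ContinuousLinearMap.one_apply,
      opL_fixes_vec hρ0 hρ1, sub_self]
  have h2 : vec ρ = 0 := by
    calc vec ρ = ((↑u⁻¹ * ↑u : H2 →L[ℂ] H2)) (vec ρ) := by
          rw [u.inv_mul]; rfl
      _ = (↑u⁻¹ : H2 →L[ℂ] H2) ((↑u : H2 →L[ℂ] H2) (vec ρ)) := rfl
      _ = (↑u⁻¹ : H2 →L[ℂ] H2) ((algebraMap ℂ (H2 →L[ℂ] H2) 1 - opL hρ0 hρ1) (vec ρ)) := by
          rw [hu]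
      _ = 0 := by rw [h1, map_zero]
  exact vec_ne_zero hρ0 h2

include hρ0 hρ1 in
lemma spec_eq : spectrum ℂ (opL hρ0 hρ1) \ {0} = {1} := by
  ext lam
  simp only [Set.mem_diff, Set.mem_singleton_iff]
  constructor
  · rintro ⟨hmem, hne⟩
    by_contra h1
    exact (spectrum.mem_iff.1 hmem) (isUnit_algebraMap_sub hρ0 hρ1 lam hne h1)
  · rintro rfl
    exact ⟨one_mem_spectrum hρ0 hρ1, one_ne_zero⟩

include hρ0 hρ1 in
lemma fixed_unique (x : H2) (hx : opL hρ0 hρ1 x = x) : ∃ cc : ℂ, x = cc • vec ρ := by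
  have hxn : ∀ n : ℤ, (x : ∀ _ : ℤ, ℂ) n = (coef ρ n : ℂ) * x (2*n) := by
    intro n
    conv_lhs => rw [← hx]
    rfl
  have hzero : ∀ n : ℤ, n ≠ 0 → (x : ∀ _ : ℤ, ℂ) n = 0 := by
    intro n hn
    have hiter : ∀ k : ℕ, (x : ∀ _ : ℤ, ℂ) n = (Ck ρ k n : ℂ) * x ((2^k : ℤ) * n) := by
      intro k
      induction k with
      | zero => simp [Ck]
      | succ k ih =>
        have hne : ((2^k : ℤ) * n) ≠ 0 := by
          have : (0:ℤ) < 2^k := by positivity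
          intro hcon
          rcases mul_eq_zero.1 hcon with h | h
          · omega
          · exact hn h
        have step : (x : ∀ _ : ℤ, ℂ) ((2^k : ℤ) * n)
            = (cD ρ ((2^k : ℤ) * n) : ℂ) * x ((2^(k+1) : ℤ) * n) := by
          rw [hxn ((2^k : ℤ) * n)]
          have : cD ρ ((2^k : ℤ) * n) = coef ρ ((2^k : ℤ) * n) := by
            unfold cD; rw [if_neg hne]
          rw [this]
          have hidx : (2:ℤ) * (2^k * n) = 2^(k+1)*n := by ring
          rw [hidx]
        rw [ih, step, show Ck ρ (k+1) n = Ck ρ k n * cD ρ ((2^k : ℤ) * n) from rfl]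
        push_cast
        ring
    have hbound : ∀ k : ℕ,
        ‖(x : ∀ _ : ℤ, ℂ) n‖ ≤ ((Real.sqrt 2)^(k+1) * ρ ^ (2^(k+1) - 1)) * ‖x‖ := by
      intro k
      rw [hiter (k+1), norm_mul]
      have hn1 : ‖((Ck ρ (k+1) n : ℝ) : ℂ)‖ = |Ck ρ (k+1) n| := by
        rw [Complex.norm_real, Real.norm_eq_abs]
      rw [hn1]
      exact mul_le_mul (Ck_abs_le hρ0 hρ1 k n)
        (lp.norm_apply_le_norm (by norm_num) x _) (norm_nonneg _) (by positivity)
    by_contra hne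
    have hpos : 0 < ‖(x : ∀ _ : ℤ, ℂ) n‖ := norm_pos_iff.2 hne
    set ε : ℝ := min 1 (‖(x : ∀ _ : ℤ, ℂ) n‖ / (2 * (‖x‖ + 1))) with hε
    have hεpos : 0 < ε := by
      apply lt_min one_pos
      apply div_pos hpos
      nlinarith [norm_nonneg x]
    obtain ⟨k, hk⟩ := decay hρ0 hρ1 ε hεpos
    have hεle : ε^(k+1) ≤ ε := pow_le_of_le_one hεpos.le (min_le_left _ _) (Nat.succ_ne_zero k)
    have hchain : ‖(x : ∀ _ : ℤ, ℂ) n‖ ≤ ε * ‖x‖ := by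
      refine (hbound k).trans ?_
      exact mul_le_mul_of_nonneg_right (hk.trans hεle) (norm_nonneg x)
    have hfin : ε * ‖x‖ < ‖(x : ∀ _ : ℤ, ℂ) n‖ := by
      have h1 : ε ≤ ‖(x : ∀ _ : ℤ, ℂ) n‖ / (2 * (‖x‖ + 1)) := min_le_right _ _
      have h2 : 0 < 2 * (‖x‖ + 1) := by nlinarith [norm_nonneg x]
      have h3 : ε * ‖x‖ ≤ (‖(x : ∀ _ : ℤ, ℂ) n‖ / (2 * (‖x‖ + 1))) * ‖x‖ :=
        mul_le_mul_of_nonneg_right h1 (norm_nonneg x)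
      refine h3.trans_lt ?_
      rw [div_mul_eq_mul_div, div_lt_iff₀ h2]
      nlinarith [norm_nonneg x]
    linarith
  refine ⟨(x : ∀ _ : ℤ, ℂ) 0 / ((Real.sqrt (hardyWeight ρ 0) : ℂ)), ?_⟩
  apply lp.ext
  funext n
  have hsmul : ((((x : ∀ _ : ℤ, ℂ) 0 / ((Real.sqrt (hardyWeight ρ 0) : ℂ))) • vec ρ
      : H2) : ∀ _ : ℤ, ℂ) n
      = ((x : ∀ _ : ℤ, ℂ) 0 / ((Real.sqrt (hardyWeight ρ 0) : ℂ))) * (vec ρ : ∀ _ : ℤ, ℂ) n := by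
    rw [lp.coeFn_smul, Pi.smul_apply, smul_eq_mul]
  rw [hsmul, vec_apply]
  by_cases hn : n = 0
  · subst hn
    rw [if_pos rfl, div_mul_cancel₀]
    have := Real.sqrt_pos.2 (hw_pos hρ0 0)
    exact Complex.ofReal_ne_zero.mpr (ne_of_gt this)
  · rw [if_neg hn, mul_zero, hzero n hn]

end Spec


/-! ### Compactness -/

section Compact
variable {ρ : ℝ} (hρ0 : 0 < ρ) (hρ1 : ρ < 1)

/-- evaluation functional -/
noncomputable def ev (i : ℤ) : H2 →L[ℂ] ℂ :=
  LinearMap.mkContinuous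
    { toFun := fun a : H2 => a i
      map_add' := fun a b => by simp [lp.coeFn_add]
      map_smul' := fun c a => by simp [lp.coeFn_smul] } 1
    (fun a => by rw [one_mul]; exact lp.norm_apply_le_norm (by norm_num) a i)

@[simp] lemma ev_apply (i : ℤ) (a : H2) : ev i a = a i := rfl

lemma isCompactOperator_smulRight (φ : H2 →L[ℂ] ℂ) (v : H2) :
    IsCompactOperator (φ.smulRight v) := by
  refine ⟨(fun c : ℂ => c • v) '' Metric.closedBall 0 ‖φ‖, ?_, ?_⟩
  · exact (isCompact_closedBall 0 ‖φ‖).image (continuous_id.smul continuous_const)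
  · refine Filter.mem_of_superset (Metric.ball_mem_nhds 0 one_pos) ?_
    intro a ha
    refine ⟨φ a, ?_, rfl⟩
    rw [Metric.mem_closedBall, dist_zero_right]
    calc ‖φ a‖ ≤ ‖φ‖ * ‖a‖ := φ.le_opNorm a
      _ ≤ ‖φ‖ * 1 := by
          refine mul_le_mul_of_nonneg_left ?_ (norm_nonneg φ)
          exact le_of_lt (by simpa [Metric.mem_ball, dist_zero_right] using ha)
      _ = ‖φ‖ := mul_one _

/-- rank one pieces -/
noncomputable def rk1 (ρ : ℝ) (i : ℤ) : H2 →L[ℂ] H2 :=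
  (coef ρ i : ℂ) • ((ev (2*i)).smulRight (lp.single 2 i (1:ℂ)))

lemma rk1_compact (i : ℤ) : IsCompactOperator (rk1 ρ i) := by
  have h := (isCompactOperator_smulRight (ev (2*i)) (lp.single 2 i (1:ℂ))).smul
    ((coef ρ i : ℂ))
  have he : ⇑(rk1 ρ i) = (coef ρ i : ℂ) • ⇑((ev (2*i)).smulRight (lp.single 2 i (1:ℂ))) := by
    funext a
    rw [rk1, ContinuousLinearMap.smul_apply]
    rfl
  rw [he]
  exact h

lemma rk1_apply (i : ℤ) (a : H2) (n : ℤ) :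
    ((rk1 ρ i) a : ∀ _ : ℤ, ℂ) n
      = (coef ρ i : ℂ) * (a (2*i) * (if n = i then 1 else 0)) := by
  have h1 : (rk1 ρ i) a = (coef ρ i : ℂ) • (a (2*i) • lp.single 2 i (1:ℂ)) := rfl
  rw [h1, lp.coeFn_smul, Pi.smul_apply, lp.coeFn_smul, Pi.smul_apply, smul_eq_mul, smul_eq_mul]
  congr 1
  congr 1
  by_cases hn : n = i
  · subst hn; rw [if_pos rfl, lp.single_apply_self]
  · rw [if_neg hn, lp.single_apply_ne 2 i _ hn]

/-- truncated coefficients -/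
noncomputable def γk (ρ : ℝ) (k : ℕ) : ℤ → ℝ := fun n => if n.natAbs ≤ k then coef ρ n else 0

include hρ0 hρ1 in
lemma abs_γk_le (k : ℕ) (n : ℤ) : |γk ρ k n| ≤ Real.sqrt 2 := by
  unfold γk; split
  · exact abs_coef_le hρ0 hρ1 n
  · simp [Real.sqrt_nonneg]

/-- truncated operators -/
noncomputable def opT (k : ℕ) : H2 →L[ℂ] H2 :=
  wcOp (γk ρ k) (fun n => 2 * n) σ2_inj (abs_γk_le hρ0 hρ1 k)

lemma opT_eq_sum (k : ℕ) :
    opT hρ0 hρ1 k = ∑ i ∈ Finset.Icc (-(k:ℤ)) (k:ℤ), rk1 ρ i := by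
  refine ContinuousLinearMap.ext fun a => lp.ext (funext fun n => ?_)
  have hrhs : (((∑ i ∈ Finset.Icc (-(k:ℤ)) (k:ℤ), rk1 ρ i) a) : ∀ _ : ℤ, ℂ) n
      = ∑ i ∈ Finset.Icc (-(k:ℤ)) (k:ℤ), ((rk1 ρ i a) : ∀ _ : ℤ, ℂ) n := by
    rw [ContinuousLinearMap.sum_apply]
    simp only [lp.coeFn_sum, Finset.sum_apply]
  rw [hrhs]
  have hterm : ∀ i ∈ Finset.Icc (-(k:ℤ)) (k:ℤ),
      ((rk1 ρ i a) : ∀ _ : ℤ, ℂ) n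
        = if i = n then (coef ρ n : ℂ) * a (2*n) else 0 := by
    intro i _
    rw [rk1_apply]
    by_cases hn : n = i
    · subst hn; rw [if_pos rfl, if_pos rfl, mul_one]
    · rw [if_neg hn, if_neg (fun h => hn h.symm), mul_zero, mul_zero]
  rw [Finset.sum_congr rfl hterm, Finset.sum_ite_eq' _ n _]
  have hmem : n ∈ Finset.Icc (-(k:ℤ)) (k:ℤ) ↔ n.natAbs ≤ k := by
    rw [Finset.mem_Icc]; omega
  show (γk ρ k n : ℂ) * a (2*n) = _
  unfold γk
  by_cases hc : n.natAbs ≤ k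
  · rw [if_pos hc, if_pos (hmem.2 hc)]
  · rw [if_neg hc, if_neg (fun h => hc (hmem.1 h))]
    push_cast
    rw [zero_mul]

lemma opT_compact (k : ℕ) : IsCompactOperator (opT hρ0 hρ1 k) := by
  rw [opT_eq_sum hρ0 hρ1 k]
  have : ∀ s : Finset ℤ, IsCompactOperator ((∑ i ∈ s, rk1 ρ i : H2 →L[ℂ] H2)) := by
    intro s
    classical
    induction s using Finset.induction_on with
    | empty =>
      rw [Finset.sum_empty]
      have : ⇑(0 : H2 →L[ℂ] H2) = (fun _ : H2 => (0 : H2)) := rfl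
      rw [this]
      exact isCompactOperator_zero
    | @insert j s hnotmem ih =>
      rw [Finset.sum_insert hnotmem]
      have he : ⇑((rk1 ρ j + ∑ i ∈ s, rk1 ρ i : H2 →L[ℂ] H2))
          = ⇑(rk1 ρ j) + ⇑(∑ i ∈ s, rk1 ρ i : H2 →L[ℂ] H2) := rfl
      rw [he]
      exact (rk1_compact j).add ih
  exact this _

include hρ0 hρ1 in
lemma opT_tendsto : Filter.Tendsto (fun k => opT hρ0 hρ1 k) Filter.atTop (nhds (opL hρ0 hρ1)) := by
  rw [tendsto_iff_norm_sub_tendsto_zero]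
  have hb : ∀ k : ℕ, ‖opT hρ0 hρ1 k - opL hρ0 hρ1‖ ≤ Real.sqrt 2 * ρ^(k+1) := by
    intro k
    refine ContinuousLinearMap.opNorm_le_bound _ (by positivity) (fun a => ?_)
    refine norm_le_of_eq (fun n => γk ρ k n - coef ρ n) (fun n => 2 * n) σ2_inj
      (M := Real.sqrt 2 * ρ^(k+1)) ?_ a _ ?_
    · intro n
      unfold γk
      by_cases hc : n.natAbs ≤ k
      · rw [if_pos hc, sub_self, abs_zero]; positivity
      · rw [if_neg hc, zero_sub, abs_neg]
        refine (abs_coef_le' hρ0 hρ1 n).trans ?_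
        have h1 : ρ ^ n.natAbs ≤ ρ ^ (k+1) :=
          pow_le_pow_of_le_one hρ0.le hρ1.le (by omega)
        exact mul_le_mul_of_nonneg_left h1 (Real.sqrt_nonneg 2)
    · intro n
      have h1 : (((opT hρ0 hρ1 k - opL hρ0 hρ1) a) : ∀ _ : ℤ, ℂ) n
          = ((opT hρ0 hρ1 k a) : ∀ _ : ℤ, ℂ) n - ((opL hρ0 hρ1 a) : ∀ _ : ℤ, ℂ) n := by
        rw [ContinuousLinearMap.sub_apply, lp.coeFn_sub]; rfl
      rw [h1]
      show (γk ρ k n : ℂ) * a (2*n) - (coef ρ n : ℂ) * a (2*n) = _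
      push_cast
      ring
  have h0 : Filter.Tendsto (fun k : ℕ => Real.sqrt 2 * ρ^(k+1)) Filter.atTop (nhds 0) := by
    have h1 : Filter.Tendsto (fun k : ℕ => ρ^(k+1)) Filter.atTop (nhds 0) :=
      (tendsto_pow_atTop_nhds_zero_of_lt_one hρ0.le hρ1).comp (Filter.tendsto_add_atTop_nat 1)
    have := h1.const_mul (Real.sqrt 2)
    simpa using this
  exact squeeze_zero (fun k => norm_nonneg _) hb h0

include hρ0 hρ1 in
lemma opL_compact : IsCompactOperator (opL hρ0 hρ1) :=
  isCompactOperator_of_tendsto (opT_tendsto hρ0 hρ1)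
    (Filter.Eventually.of_forall (fun k => opT_compact hρ0 hρ1 k))

end Compact


end DPF

/-- The Perron-Frobenius operator of the doubling map `τ(z) = z²` acts on
Laurent coefficients by `(ℒf)ˆ(n) = fˆ(2n)`. In the unitary coefficient
model of `H²(𝔸_ρ)` on `ℓ²(ℤ)` (a vector `a` represents
`f(z) = Σₙ (aₙ/√(w ρ n)) zⁿ`), this operator: (1) maps `H²(𝔸_ρ)` boundedly
into `H²(𝔸_{ρ'})` with `ρ' = ρ²`; (2) is a compact operator on `H²(𝔸_ρ)`
whose nonzero spectrum is exactly `{1}`, the eigenvalue `1` being simple with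
eigenfunction the constant function `1` (the vector `√(w ρ 0) • e₀`). -/
theorem doubling_pf_compact_spectrum (ρ : ℝ) (hρ0 : 0 < ρ) (hρ1 : ρ < 1) :
    (∃ L' : lp (fun _ : ℤ => ℂ) 2 →L[ℂ] lp (fun _ : ℤ => ℂ) 2,
      ∀ (a : lp (fun _ : ℤ => ℂ) 2) (n : ℤ),
        (L' a) n = ((Real.sqrt (hardyWeight (ρ ^ 2) n)
          / Real.sqrt (hardyWeight ρ (2 * n)) : ℝ) : ℂ) * a (2 * n)) ∧
    (∃ L : lp (fun _ : ℤ => ℂ) 2 →L[ℂ] lp (fun _ : ℤ => ℂ) 2,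
      (∀ (a : lp (fun _ : ℤ => ℂ) 2) (n : ℤ),
        (L a) n = ((Real.sqrt (hardyWeight ρ n)
          / Real.sqrt (hardyWeight ρ (2 * n)) : ℝ) : ℂ) * a (2 * n)) ∧
      IsCompactOperator L ∧
      spectrum ℂ L \ {0} = {1} ∧
      L (((Real.sqrt (hardyWeight ρ 0) : ℂ)) • lp.single 2 0 1)
        = ((Real.sqrt (hardyWeight ρ 0) : ℂ)) • lp.single 2 0 1 ∧
      (∀ x : lp (fun _ : ℤ => ℂ) 2, L x = x →
        ∃ c : ℂ, x = c • ((Real.sqrt (hardyWeight ρ 0) : ℂ)) • lp.single 2 0 1)) := by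
  constructor
  · refine ⟨DPF.wcOp
      (fun n => Real.sqrt (hardyWeight (ρ^2) n) / Real.sqrt (hardyWeight ρ (2*n)))
      (fun n => 2*n) DPF.σ2_inj (M := 1) ?_, fun a n => rfl⟩
    intro n
    rw [DPF.hw_sq n, div_self (ne_of_gt (Real.sqrt_pos.2 (DPF.hw_pos hρ0 (2*n))))]
    norm_num
  · refine ⟨DPF.opL hρ0 hρ1, fun a n => rfl, DPF.opL_compact hρ0 hρ1,
      DPF.spec_eq hρ0 hρ1, DPF.opL_fixes_vec hρ0 hρ1,
      fun x hx => DPF.fixed_unique hρ0 hρ1 x hx⟩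
end
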